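/- arXiv:1210.7469 — 5 statements merged into one kernel-verified Lean document; each statement's English description precedes it below -/
import Mathlib

section
/- Let Φ be a finite NCIFS. Then the Hausdorff dimension of the limit set J(Φ) is bounded above by the Bowen dimension B(Φ) = sup{t ≥ 0 : P̲(t) > 0}, where P̲ is the lower pressure function. -/
open Metric Set Filter Topology MeasureTheory
open scoped ENNReal

noncomputable section

/-- A non-autonomous conformal iterated function system (NCIFS) on a compact subset `X` of
`ℝ^d`, encoded via the composed maps `wMap m n ω` associated with finite words `ω` occupying
levels `m, m+1, …, n-1`, together with their conformal derivative norms `segN m n ω = ‖Dφ_ω‖`.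
The fields record the standing assumptions: the open set condition, bounded distortion with
constant `K` (both for derivative norms of split words and as two-sided Lipschitz bounds),
and uniform contraction with constant `η < 1`. -/
structure NCIFS (d : ℕ) where
  X : Set (EuclideanSpace ℝ (Fin d))
  hX_compact : IsCompact X
  hX_nonempty : X.Nonempty
  hX_regular : closure (interior X) = X
  hX_convex : Convex ℝ X
  I : ℕ → Type
  hI_ne : ∀ n, Nonempty (I n)
  K : ℝ
  hK : 1 ≤ K
  η : ℝ
  hη_pos : 0 < η
  hη_lt : η < 1
  /-- `segN m n ω` is the derivative norm `‖Dφ_ω‖` of the word `ω` on levels `m, …, n-1`. -/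
  segN : (m n : ℕ) → ((j : Finset.Ico m n) → I j) → ℝ
  segN_pos : ∀ m n ω, 0 < segN m n ω
  /-- uniform contraction -/
  segN_contract : ∀ m n ω, segN m n ω ≤ η ^ (n - m)
  /-- submultiplicativity and bounded distortion for derivative norms of split words -/
  segN_split : ∀ m k n, m ≤ k → k ≤ n →
      ∀ (ω : (j : Finset.Ico m n) → I j) (ω₁ : (j : Finset.Ico m k) → I j)
        (ω₂ : (j : Finset.Ico k n) → I j),
        (∀ (j : ℕ) (h₁ : j ∈ Finset.Ico m k) (h₂ : j ∈ Finset.Ico m n),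
            ω₁ ⟨j, h₁⟩ = ω ⟨j, h₂⟩) →
        (∀ (j : ℕ) (h₁ : j ∈ Finset.Ico k n) (h₂ : j ∈ Finset.Ico m n),
            ω₂ ⟨j, h₁⟩ = ω ⟨j, h₂⟩) →
        segN m n ω ≤ segN m k ω₁ * segN k n ω₂ ∧
          segN m k ω₁ * segN k n ω₂ ≤ K * segN m n ω
  /-- the conformal contraction associated to the word `ω` on levels `m, …, n-1` -/
  wMap : (m n : ℕ) → ((j : Finset.Ico m n) → I j) →
      EuclideanSpace ℝ (Fin d) → EuclideanSpace ℝ (Fin d)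
  wMap_id : ∀ m (ω : (j : Finset.Ico m m) → I j) x, wMap m m ω x = x
  wMap_mapsTo : ∀ m n ω, MapsTo (wMap m n ω) X X
  /-- upper conformal bound: `φ_ω` is `‖Dφ_ω‖`-Lipschitz on `X` -/
  wMap_lip : ∀ m n ω, ∀ x ∈ X, ∀ y ∈ X,
      dist (wMap m n ω x) (wMap m n ω y) ≤ segN m n ω * dist x y
  /-- lower conformal bound (bounded distortion) -/
  wMap_colip : ∀ m n ω, ∀ x ∈ X, ∀ y ∈ X,
      segN m n ω / K * dist x y ≤ dist (wMap m n ω x) (wMap m n ω y)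
  /-- compatibility of the maps under splitting of words -/
  wMap_comp : ∀ m k n, m ≤ k → k ≤ n →
      ∀ (ω : (j : Finset.Ico m n) → I j) (ω₁ : (j : Finset.Ico m k) → I j)
        (ω₂ : (j : Finset.Ico k n) → I j),
        (∀ (j : ℕ) (h₁ : j ∈ Finset.Ico m k) (h₂ : j ∈ Finset.Ico m n),
            ω₁ ⟨j, h₁⟩ = ω ⟨j, h₂⟩) →
        (∀ (j : ℕ) (h₁ : j ∈ Finset.Ico k n) (h₂ : j ∈ Finset.Ico m n),
            ω₂ ⟨j, h₁⟩ = ω ⟨j, h₂⟩) →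
        ∀ x ∈ X, wMap m n ω x = wMap m k ω₁ (wMap k n ω₂ x)
  /-- the open set condition -/
  osc : ∀ n (a b : (j : Finset.Ico n (n+1)) → I j), a ≠ b →
      Disjoint (wMap n (n+1) a '' interior X) (wMap n (n+1) b '' interior X)

namespace NCIFS

variable {d : ℕ} (Φ : NCIFS d)

/-- Words occupying levels `m, …, n-1`. -/
abbrev Word (m n : ℕ) := (j : Finset.Ico m n) → Φ.I j

instance (m n : ℕ) : Nonempty (Φ.Word m n) :=
  ⟨fun j => Classical.choice (Φ.hI_ne j)⟩

/-- The one-letter word at level `n` given by the index `i`. -/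
def single (n : ℕ) (i : Φ.I n) : Φ.Word n (n+1) :=
  fun j => cast (congrArg Φ.I (show n = (j : ℕ) by
    have := Finset.mem_Ico.mp j.2; omega)) i

/-- `‖Dφ_i^{(n)}‖`, the derivative norm of the single map with index `i` at level `n`. -/
def Dnorm (n : ℕ) (i : Φ.I n) : ℝ := Φ.segN n (n+1) (Φ.single n i)

/-- The partition function `Z_n(t) = Σ_{ω ∈ I^n} ‖Dφ_ω‖^t`, valued in `[0,∞]`. -/
def Z (n : ℕ) (t : ℝ) : ℝ≥0∞ := ∑' ω : Φ.Word 0 n, ENNReal.ofReal (Φ.segN 0 n ω ^ t)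

/-- The lower pressure `P̲(t) = liminf (1/n) log Z_n(t)`, valued in `[-∞,∞]`. -/
def lowP (t : ℝ) : EReal :=
  liminf (fun n : ℕ => (Φ.Z n t).log * (((n : ℝ)⁻¹ : ℝ) : EReal)) atTop

/-- The upper pressure `P̄(t) = limsup (1/n) log Z_n(t)`. -/
def upP (t : ℝ) : EReal :=
  limsup (fun n : ℕ => (Φ.Z n t).log * (((n : ℝ)⁻¹ : ℝ) : EReal)) atTop

/-- The Bowen dimension `B(Φ) = sup {t ≥ 0 : P̲(t) > 0}` (and `0` if there is no such `t`). -/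
def Bdim : ℝ≥0∞ := ⨆ t : {t : ℝ // 0 ≤ t ∧ (0 : EReal) < Φ.lowP t}, ENNReal.ofReal t.1

/-- The limit set `J(Φ) = ⋂_n ⋃_{ω ∈ I^n} φ_ω(X)`. -/
def limitSet : Set (EuclideanSpace ℝ (Fin d)) :=
  ⋂ n, ⋃ ω : Φ.Word 0 n, Φ.wMap 0 n ω '' Φ.X

/-- The minimal derivative norm `c̲_n` at level `n`. -/
def cmin (n : ℕ) : ℝ := ⨅ i : Φ.I n, Φ.Dnorm n i

/-- The maximal derivative norm `c̄_n` at level `n`. -/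
def cmax (n : ℕ) : ℝ := ⨆ i : Φ.I n, Φ.Dnorm n i

/-- `ρ_n`, the maximal ratio of derivative norms at level `n`. -/
def ρ (n : ℕ) : ℝ := Φ.cmax n / Φ.cmin n

/-- The modified partition function
`Z̃_n(t) = Z_{n-1}(t) · (#I^{(n)})^{t/d} · c̲_n^t`. -/
def Zt (n : ℕ) (t : ℝ) : ℝ≥0∞ :=
  Φ.Z (n - 1) t * ENNReal.ofReal ((Nat.card (Φ.I n) : ℝ) ^ (t / (d : ℝ)) * Φ.cmin n ^ t)

/-- `P̃(t) = liminf (1/n) log Z̃_n(t)`. -/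
def tP (t : ℝ) : EReal :=
  liminf (fun n : ℕ => (Φ.Zt n t).log * (((n : ℝ)⁻¹ : ℝ) : EReal)) atTop

end NCIFS

/-! If `B(Φ) < s < t`, then `P̲(s) ≤ 0`, so for every `r > 1` we have `Z_n(s) < rⁿ` for
infinitely many `n`. Covering `J(Φ)` by the level-`n` pieces `φ_ω(X)`, of diameter at most
`‖Dφ_ω‖ diam X ≤ η^n diam X`, gives `Σ_ω (diam φ_ω(X))^t ≤ (diam X)^t (η^{t-s})ⁿ Z_n(s)`.
Choosing `r` with `r η^{t-s} < 1` makes these sums tend to `0` along those `n`, so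
`μH[t] J(Φ) = 0` for every `t > B(Φ)`. -/

theorem ENNReal.liminf_eq_zero_of_frequently_le_of_tendsto {α : Type*} {l : Filter α}
    {u v : α → ℝ≥0∞} (huv : ∃ᶠ n in l, u n ≤ v n) (hv : Tendsto v l (𝓝 0)) :
    liminf u l = 0 := by
  refine le_antisymm (le_of_forall_gt_imp_ge_of_dense fun ε hε => ?_) zero_le
  refine liminf_le_of_frequently_le' ?_
  exact (huv.and_eventually (hv.eventually_le_const hε)).mono fun n h => h.1.trans h.2

theorem ENNReal.frequently_lt_pow_of_liminf_log_mul_inv_nonpos {a : ℕ → ℝ≥0∞}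
    (h : liminf (fun n : ℕ => (a n).log * (((n : ℝ)⁻¹ : ℝ) : EReal)) atTop ≤ 0)
    {r : ℝ≥0∞} (hr : 1 < r) : ∃ᶠ n in atTop, a n < r ^ n := by
  have hlog : ∃ᶠ n : ℕ in atTop, (a n).log * (((n : ℝ)⁻¹ : ℝ) : EReal) < r.log :=
    frequently_lt_of_liminf_lt (by isBoundedDefault) (h.trans_lt (zero_lt_log_iff.mpr hr))
  refine (hlog.and_eventually (eventually_ne_atTop 0)).mono fun n ⟨hn, hn0⟩ => ?_
  rw [mul_comm, ← log_rpow, log_lt_log_iff] at hn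
  simpa only [rpow_inv_natCast_pow hn0] using (ENNReal.pow_lt_pow_left_iff hn0).mpr hn

namespace NCIFS

variable {d : ℕ} (Φ : NCIFS d)

theorem ediam_image_wMap_le (m n : ℕ) (ω : Φ.Word m n) :
    ediam (Φ.wMap m n ω '' Φ.X) ≤ ENNReal.ofReal (Φ.segN m n ω * diam Φ.X) := by
  refine ediam_image_le_iff.mpr fun x hx y hy => ?_
  rw [edist_dist]
  refine ENNReal.ofReal_le_ofReal ((Φ.wMap_lip m n ω x hx y hy).trans ?_)
  exact mul_le_mul_of_nonneg_left (dist_le_diam_of_mem Φ.hX_compact.isBounded hx hy)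
    (Φ.segN_pos m n ω).le

theorem segN_rpow_le {s t : ℝ} (hst : s ≤ t) (m n : ℕ) (ω : Φ.Word m n) :
    Φ.segN m n ω ^ t ≤ (Φ.η ^ (t - s)) ^ (n - m) * Φ.segN m n ω ^ s := by
  have hω := Φ.segN_pos m n ω
  calc Φ.segN m n ω ^ t = Φ.segN m n ω ^ (t - s) * Φ.segN m n ω ^ s := by
        rw [← Real.rpow_add hω, sub_add_cancel]
    _ ≤ (Φ.η ^ (n - m)) ^ (t - s) * Φ.segN m n ω ^ s := by
        gcongr
        exact Φ.segN_contract m n ω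
    _ = (Φ.η ^ (t - s)) ^ (n - m) * Φ.segN m n ω ^ s := by
        rw [← Real.rpow_natCast_mul Φ.hη_pos.le, mul_comm (_ : ℝ) (t - s),
          Real.rpow_mul_natCast Φ.hη_pos.le]

section Finite

variable [∀ n, Finite (Φ.I n)]

instance (m n : ℕ) : Fintype (Φ.Word m n) := Fintype.ofFinite _

theorem hausdorffMeasure_limitSet_le_liminf (t : ℝ) :
    μH[t] Φ.limitSet ≤
      liminf (fun n => ∑ ω : Φ.Word 0 n, ediam (Φ.wMap 0 n ω '' Φ.X) ^ t) atTop := by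
  refine Measure.hausdorffMeasure_le_liminf_sum t Φ.limitSet
    (fun n => ENNReal.ofReal (Φ.η ^ n * diam Φ.X)) ?_ _
    (Eventually.of_forall fun n ω => ?_) (Eventually.of_forall fun n => iInter_subset _ n)
  · have h := (tendsto_pow_atTop_nhds_zero_of_lt_one Φ.hη_pos.le Φ.hη_lt).mul_const (diam Φ.X)
    simpa only [zero_mul, ENNReal.ofReal_zero] using ENNReal.tendsto_ofReal h
  · refine (Φ.ediam_image_wMap_le 0 n ω).trans (ENNReal.ofReal_le_ofReal ?_)
    simpa only [Nat.sub_zero] using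
      mul_le_mul_of_nonneg_right (Φ.segN_contract 0 n ω) diam_nonneg

theorem sum_ediam_rpow_le {s t : ℝ} (hst : s ≤ t) (ht : 0 ≤ t) (n : ℕ) :
    ∑ ω : Φ.Word 0 n, ediam (Φ.wMap 0 n ω '' Φ.X) ^ t ≤
      ENNReal.ofReal (diam Φ.X ^ t * (Φ.η ^ (t - s)) ^ n) * Φ.Z n s := by
  rw [Z, tsum_fintype, Finset.mul_sum]
  refine Finset.sum_le_sum fun ω _ => ?_
  have hω := Φ.segN_pos 0 n ω
  have hcoeff : 0 ≤ diam Φ.X ^ t * (Φ.η ^ (t - s)) ^ n := by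
    have := Φ.hη_pos
    positivity
  calc ediam (Φ.wMap 0 n ω '' Φ.X) ^ t
      ≤ ENNReal.ofReal (Φ.segN 0 n ω * diam Φ.X) ^ t := by
        gcongr
        exact Φ.ediam_image_wMap_le 0 n ω
    _ = ENNReal.ofReal (diam Φ.X ^ t * Φ.segN 0 n ω ^ t) := by
        rw [ENNReal.ofReal_rpow_of_nonneg (mul_nonneg hω.le diam_nonneg) ht,
          Real.mul_rpow hω.le diam_nonneg, mul_comm]
    _ ≤ ENNReal.ofReal (diam Φ.X ^ t * ((Φ.η ^ (t - s)) ^ n * Φ.segN 0 n ω ^ s)) := by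
        gcongr
        simpa only [Nat.sub_zero] using Φ.segN_rpow_le hst 0 n ω
    _ = ENNReal.ofReal (diam Φ.X ^ t * (Φ.η ^ (t - s)) ^ n) *
          ENNReal.ofReal (Φ.segN 0 n ω ^ s) := by
        rw [← mul_assoc, ENNReal.ofReal_mul hcoeff]

theorem hausdorffMeasure_limitSet_eq_zero {s t : ℝ} (hs : 0 ≤ s) (hst : s < t)
    (hP : Φ.lowP s ≤ 0) : μH[t] Φ.limitSet = 0 := by
  set c := Φ.η ^ (t - s)
  have hc0 : 0 < c := Real.rpow_pos_of_pos Φ.hη_pos _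
  have hc : c < 1 := Real.rpow_lt_one Φ.hη_pos.le Φ.hη_lt (sub_pos.mpr hst)
  obtain ⟨r, hr1, hrc⟩ := exists_between (one_lt_inv_iff₀.mpr ⟨hc0, hc⟩)
  have hcr : c * r < 1 := by
    simpa only [mul_inv_cancel₀ hc0.ne'] using mul_lt_mul_of_pos_left hrc hc0
  have hZ : ∃ᶠ n in atTop, Φ.Z n s < ENNReal.ofReal r ^ n :=
    ENNReal.frequently_lt_pow_of_liminf_log_mul_inv_nonpos hP (by simpa using hr1)
  have hsum : ∃ᶠ n in atTop, ∑ ω : Φ.Word 0 n, ediam (Φ.wMap 0 n ω '' Φ.X) ^ t ≤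
      ENNReal.ofReal (diam Φ.X ^ t * (c * r) ^ n) := hZ.mono fun n hn => by
    calc _ ≤ ENNReal.ofReal (diam Φ.X ^ t * c ^ n) * Φ.Z n s :=
          Φ.sum_ediam_rpow_le hst.le (hs.trans hst.le) n
      _ ≤ ENNReal.ofReal (diam Φ.X ^ t * c ^ n) * ENNReal.ofReal r ^ n := by gcongr
      _ = ENNReal.ofReal (diam Φ.X ^ t * (c * r) ^ n) := by
          rw [← ENNReal.ofReal_pow (by linarith), ← ENNReal.ofReal_mul (by positivity),
            mul_pow, mul_assoc]
  have hlim :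
      Tendsto (fun n : ℕ => ENNReal.ofReal (diam Φ.X ^ t * (c * r) ^ n)) atTop (𝓝 0) := by
    have h := (tendsto_pow_atTop_nhds_zero_of_lt_one (by positivity) hcr).const_mul
      (diam Φ.X ^ t)
    simpa only [mul_zero, ENNReal.ofReal_zero] using ENNReal.tendsto_ofReal h
  exact le_antisymm ((Φ.hausdorffMeasure_limitSet_le_liminf t).trans
    (ENNReal.liminf_eq_zero_of_frequently_le_of_tendsto hsum hlim).le) zero_le

end Finite

theorem lowP_nonpos_of_Bdim_lt {s : ℝ} (hs : 0 ≤ s) (h : Φ.Bdim < ENNReal.ofReal s) :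
    Φ.lowP s ≤ 0 := by
  by_contra! hP
  exact h.not_ge (le_iSup (fun u : {u : ℝ // 0 ≤ u ∧ (0 : EReal) < Φ.lowP u} =>
    ENNReal.ofReal u.1) ⟨s, hs, hP⟩)

end NCIFS

/-- For a finite NCIFS, the Hausdorff dimension of the limit set is
bounded above by the Bowen dimension `B(Φ) = sup {t ≥ 0 : P̲(t) > 0}`. -/
theorem NCIFS.dimH_le_Bdim {d : ℕ} (Φ : NCIFS d) [∀ n, Finite (Φ.I n)] :
    dimH Φ.limitSet ≤ Φ.Bdim := by
  refine dimH_le fun t ht => le_of_not_gt fun hBt => ?_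
  obtain ⟨s, hBs, hst⟩ := ENNReal.lt_iff_exists_nnreal_btwn.mp hBt
  have hP : Φ.lowP s ≤ 0 := Φ.lowP_nonpos_of_Bdim_lt s.2 (by rwa [ENNReal.ofReal_coe_nnreal])
  have hzero := Φ.hausdorffMeasure_limitSet_eq_zero s.2 (by exact_mod_cast hst) hP
  exact ENNReal.zero_ne_top (hzero ▸ ht)
end
end

section
/- Let Φ be a finite NCIFS, and define the modified partition function Z̃_n(t) = Z_{n-1}(t)·(#I^(n))^{t/d}·(min_{a ∈ I^(n)} ‖Dφ_a^(n)‖)^t and P̃(t) = liminf_{n→∞} (1/n) log Z̃_n(t). Then P̃ is strictly decreasing where finite; more precisely, if t' < t and P̃(t) is finite then P̃(t') ≥ P̃(t) + (t - t')·log(1/η), where η is the uniform contraction constant. -/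
open Metric Set Filter Topology MeasureTheory
open scoped ENNReal

noncomputable section

/-!
Every word of length `n - 1` has `‖Dφ_ω‖ ≤ η^(n-1)`, so lowering the exponent from `t` to `t'`
multiplies each term of `Z_{n-1}` by at least `η^(-(n-1)(t-t'))`. The correction factor
`#I^(n)^(t/d) · c̲_n^t` equals `(#I^(n) · c̲_n^d)^(t/d)`, and `#I^(n) · c̲_n^d` is bounded: the
images of a fixed ball `B ⊆ int X` under the level-`n` maps are disjoint by the open set
condition, lie in `X`, and each has `d`-dimensional Hausdorff measure at least
`(c̲_n / K)^d · μH[d] B`. Hence `Z̃_n(t) ≤ η^((n-1)(t-t')) C^((t-t')/d) Z̃_n(t')`, and taking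
`(1/n) log` and `liminf` gives the claim.
-/

theorem MeasureTheory.ofReal_rpow_mul_hausdorffMeasure_le_image {X Y : Type*} [MetricSpace X]
    [MeasurableSpace X] [BorelSpace X] [MetricSpace Y] [MeasurableSpace Y] [BorelSpace Y]
    {f : X → Y} {s : Set X} {c d : ℝ} (hc : 0 < c) (hd : 0 ≤ d)
    (hf : ∀ x ∈ s, ∀ y ∈ s, c * dist x y ≤ dist (f x) (f y)) :
    ENNReal.ofReal (c ^ d) * μH[d] s ≤ μH[d] (f '' s) := by
  have hanti : AntilipschitzWith (c⁻¹).toNNReal (s.domRestrict f) :=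
    AntilipschitzWith.of_le_mul_dist fun x y => by
      rw [Real.coe_toNNReal _ (by positivity), inv_mul_eq_div, le_div_iff₀' hc]
      exact hf x x.2 y y.2
  have hs : μH[d] (univ : Set s) = μH[d] s := by
    rw [← (isometry_subtype_coe (s := s)).hausdorffMeasure_image (Or.inl hd),
      Subtype.coe_image_univ]
  have key := hanti.le_hausdorffMeasure_image hd univ
  rw [hs, image_univ, range_domRestrict] at key
  calc ENNReal.ofReal (c ^ d) * μH[d] s
      ≤ ENNReal.ofReal (c ^ d) * (ENNReal.ofReal c⁻¹ ^ d * μH[d] (f '' s)) := by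
        gcongr; exact key
    _ = μH[d] (f '' s) := by
      rw [ENNReal.ofReal_rpow_of_nonneg (by positivity) hd, ← mul_assoc,
        ← ENNReal.ofReal_mul (by positivity), ← Real.mul_rpow hc.le (by positivity),
        mul_inv_cancel₀ hc.ne', Real.one_rpow, ENNReal.ofReal_one, one_mul]

theorem MeasureTheory.card_mul_le_measure_of_pairwiseDisjoint {α ι : Type*} [MeasurableSpace α]
    [Fintype ι] {μ : Measure α} {B : ι → Set α} {S : Set α} {a : ℝ≥0∞}
    (hB : ∀ i, MeasurableSet (B i)) (hdisj : Pairwise (Function.onFun Disjoint B))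
    (hBS : ∀ i, B i ⊆ S) (ha : ∀ i, a ≤ μ (B i)) :
    Fintype.card ι * a ≤ μ S :=
  calc (Fintype.card ι : ℝ≥0∞) * a = ∑ _i : ι, a := by simp
    _ ≤ ∑ i, μ (B i) := Finset.sum_le_sum fun i _ => ha i
    _ = μ (⋃ i, B i) := by rw [measure_iUnion hdisj hB, tsum_fintype]
    _ ≤ μ S := measure_mono (iUnion_subset hBS)

theorem EReal.liminf_add_le_liminf {x y c : ℕ → ℝ} {L : ℝ} (hc : Tendsto c atTop (𝓝 L))
    (h : ∀ᶠ n in atTop, x n + c n ≤ y n) :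
    liminf (fun n => (x n : EReal)) atTop + L ≤ liminf (fun n => (y n : EReal)) atTop := by
  have hL : liminf (fun n => (c n : EReal)) atTop = L :=
    ((continuous_coe_real_ereal.tendsto L).comp hc).liminf_eq
  calc liminf (fun n => (x n : EReal)) atTop + L
      ≤ liminf (fun n => (x n : EReal) + c n) atTop := hL ▸ EReal.le_liminf_add
    _ ≤ liminf (fun n => (y n : EReal)) atTop :=
      liminf_le_liminf (h.mono fun n hn => by exact_mod_cast hn)

namespace NCIFS

variable {d : ℕ} (Φ : NCIFS d)

lemma Dnorm_pos (n : ℕ) (i : Φ.I n) : 0 < Φ.Dnorm n i := Φ.segN_pos _ _ _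

lemma K_pos : 0 < Φ.K := zero_lt_one.trans_le Φ.hK

lemma single_injective (n : ℕ) : Function.Injective (Φ.single n) := fun i j hij => by
  simpa [single] using congrFun hij ⟨n, by simp⟩

section FiniteLevel

variable {n : ℕ} [Finite (Φ.I n)]

lemma cmin_le (i : Φ.I n) : Φ.cmin n ≤ Φ.Dnorm n i :=
  ciInf_le (Set.finite_range _).bddBelow i

lemma cmin_pos : 0 < Φ.cmin n := by
  have := Φ.hI_ne n
  obtain ⟨i, hi⟩ := Finite.exists_min (Φ.Dnorm n)
  exact (Φ.Dnorm_pos n i).trans_le (le_ciInf hi)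

lemma card_pos : 0 < (Nat.card (Φ.I n) : ℝ) := by
  have := Φ.hI_ne n
  exact_mod_cast Nat.card_pos

lemma card_mul_cmin_rpow_pos : 0 < (Nat.card (Φ.I n) : ℝ) * Φ.cmin n ^ (d : ℝ) := by
  have := Φ.card_pos (n := n)
  have := Φ.cmin_pos (n := n)
  positivity

end FiniteLevel

lemma exists_closedBall_subset_interior :
    ∃ x₀ r, 0 < r ∧ closedBall x₀ r ⊆ interior Φ.X := by
  obtain ⟨x₀, hx₀⟩ : (interior Φ.X).Nonempty := by
    rw [← closure_nonempty_iff, Φ.hX_regular]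
    exact Φ.hX_nonempty
  obtain ⟨r, hr, hsub⟩ := nhds_basis_closedBall.mem_iff.mp (isOpen_interior.mem_nhds hx₀)
  exact ⟨x₀, r, hr, hsub⟩

lemma ofReal_mul_hausdorffMeasure_le_image_single {n : ℕ} [Finite (Φ.I n)] (i : Φ.I n)
    {s : Set (EuclideanSpace ℝ (Fin d))} (hs : s ⊆ Φ.X) :
    ENNReal.ofReal ((Φ.cmin n / Φ.K) ^ (d : ℝ)) * μH[d] s
      ≤ μH[d] (Φ.wMap n (n + 1) (Φ.single n i) '' s) := by
  refine ofReal_rpow_mul_hausdorffMeasure_le_image (div_pos Φ.cmin_pos Φ.K_pos) d.cast_nonneg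
    fun x hx y hy => ?_
  calc Φ.cmin n / Φ.K * dist x y ≤ Φ.Dnorm n i / Φ.K * dist x y := by
        gcongr
        · exact Φ.K_pos.le
        · exact Φ.cmin_le i
    _ ≤ _ := Φ.wMap_colip _ _ _ x (hs hx) y (hs hy)

lemma card_mul_hausdorffMeasure_le (n : ℕ) [Finite (Φ.I n)] {x₀ : EuclideanSpace ℝ (Fin d)}
    {r : ℝ} (hball : closedBall x₀ r ⊆ interior Φ.X) :
    Nat.card (Φ.I n) * (ENNReal.ofReal ((Φ.cmin n / Φ.K) ^ (d : ℝ)) * μH[d] (closedBall x₀ r))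
      ≤ μH[d] Φ.X := by
  have := Fintype.ofFinite (Φ.I n)
  have hballX : closedBall x₀ r ⊆ Φ.X := hball.trans interior_subset
  rw [Nat.card_eq_fintype_card]
  refine card_mul_le_measure_of_pairwiseDisjoint
    (B := fun i => Φ.wMap n (n + 1) (Φ.single n i) '' closedBall x₀ r) (fun i => ?_)
    (fun i j hij => ?_) (fun i => ?_)
    (fun i => Φ.ofReal_mul_hausdorffMeasure_le_image_single i hballX)
  · have hlip : LipschitzOnWith (Φ.segN n (n + 1) (Φ.single n i)).toNNReal
        (Φ.wMap n (n + 1) (Φ.single n i)) Φ.X :=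
      LipschitzOnWith.of_dist_le_mul fun x hx y hy => by
        rw [Real.coe_toNNReal _ (Φ.segN_pos _ _ _).le]
        exact Φ.wMap_lip _ _ _ x hx y hy
    exact ((isCompact_closedBall x₀ r).image_of_continuousOn
      (hlip.continuousOn.mono hballX)).isClosed.measurableSet
  · exact (Φ.osc n _ _ ((Φ.single_injective n).ne hij)).mono (image_mono hball)
      (image_mono hball)
  · exact (image_mono hballX).trans (Φ.wMap_mapsTo _ _ _).image_subset

lemma exists_card_mul_cmin_rpow_le [∀ n, Finite (Φ.I n)] :
    ∃ C, ∀ n, (Nat.card (Φ.I n) : ℝ) * Φ.cmin n ^ (d : ℝ) ≤ C := by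
  obtain ⟨x₀, r, hr, hball⟩ := Φ.exists_closedBall_subset_interior
  set v := μH[d] (closedBall x₀ r)
  set m := μH[d] Φ.X
  have hv0 : 0 < v.toReal :=
    ENNReal.toReal_pos (measure_closedBall_pos _ x₀ hr).ne' measure_closedBall_lt_top.ne
  have hm : m ≠ ⊤ := Φ.hX_compact.measure_lt_top.ne
  have hK := Φ.K_pos
  refine ⟨Φ.K ^ (d : ℝ) * m.toReal / v.toReal, fun n => ?_⟩
  have hc := Φ.cmin_pos (n := n)
  have key := ENNReal.toReal_mono hm (Φ.card_mul_hausdorffMeasure_le n hball)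
  rw [ENNReal.toReal_mul, ENNReal.toReal_mul, ENNReal.toReal_natCast,
    ENNReal.toReal_ofReal (by positivity), Real.div_rpow hc.le hK.le] at key
  rw [le_div_iff₀ hv0]
  calc (Nat.card (Φ.I n) : ℝ) * Φ.cmin n ^ (d : ℝ) * v.toReal
      = Φ.K ^ (d : ℝ) * ((Nat.card (Φ.I n) : ℝ) *
          (Φ.cmin n ^ (d : ℝ) / Φ.K ^ (d : ℝ) * v.toReal)) := by
        field_simp
    _ ≤ Φ.K ^ (d : ℝ) * m.toReal := by gcongr

lemma Z_pos (m : ℕ) (t : ℝ) : 0 < Φ.Z m t := by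
  obtain ⟨ω⟩ : Nonempty (Φ.Word 0 m) := inferInstance
  exact (ENNReal.ofReal_pos.mpr (Real.rpow_pos_of_pos (Φ.segN_pos 0 m ω) t)).trans_le
    (ENNReal.le_tsum ω)

section Exponents

variable {t t' : ℝ}

lemma Z_le (m : ℕ) (h : t' ≤ t) :
    Φ.Z m t ≤ ENNReal.ofReal (Φ.η ^ ((m : ℝ) * (t - t'))) * Φ.Z m t' := by
  rw [Z, Z, ← ENNReal.tsum_mul_left]
  refine ENNReal.tsum_le_tsum fun ω => ?_
  have hω := Φ.segN_pos 0 m ω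
  have hωη : Φ.segN 0 m ω ≤ Φ.η ^ (m : ℝ) := by
    simpa using Φ.segN_contract 0 m ω
  rw [← ENNReal.ofReal_mul (by have := Φ.hη_pos; positivity)]
  refine ENNReal.ofReal_le_ofReal ?_
  calc Φ.segN 0 m ω ^ t = Φ.segN 0 m ω ^ (t - t') * Φ.segN 0 m ω ^ t' := by
        rw [← Real.rpow_add hω, sub_add_cancel]
    _ ≤ (Φ.η ^ (m : ℝ)) ^ (t - t') * Φ.segN 0 m ω ^ t' := by gcongr
    _ = Φ.η ^ ((m : ℝ) * (t - t')) * Φ.segN 0 m ω ^ t' := by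
        rw [← Real.rpow_mul Φ.hη_pos.le]

lemma card_rpow_mul_cmin_rpow_eq (hd : 0 < d) (n : ℕ) [Finite (Φ.I n)] (t : ℝ) :
    (Nat.card (Φ.I n) : ℝ) ^ (t / d) * Φ.cmin n ^ t
      = ((Nat.card (Φ.I n) : ℝ) * Φ.cmin n ^ (d : ℝ)) ^ (t / d) := by
  rw [Real.mul_rpow Φ.card_pos.le (by have := Φ.cmin_pos (n := n); positivity),
    ← Real.rpow_mul Φ.cmin_pos.le, mul_div_cancel₀ _ (by positivity)]

lemma card_rpow_mul_cmin_rpow_le (hd : 0 < d) (n : ℕ) [Finite (Φ.I n)] {C : ℝ}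
    (hC : (Nat.card (Φ.I n) : ℝ) * Φ.cmin n ^ (d : ℝ) ≤ C) (h : t' ≤ t) :
    (Nat.card (Φ.I n) : ℝ) ^ (t / d) * Φ.cmin n ^ t
      ≤ C ^ ((t - t') / d) * ((Nat.card (Φ.I n) : ℝ) ^ (t' / d) * Φ.cmin n ^ t') := by
  have hA := Φ.card_mul_cmin_rpow_pos (n := n)
  rw [Φ.card_rpow_mul_cmin_rpow_eq hd, Φ.card_rpow_mul_cmin_rpow_eq hd]
  calc _ = (_ : ℝ) ^ ((t - t') / d) * _ ^ (t' / d) := by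
        rw [← Real.rpow_add hA, ← add_div, sub_add_cancel]
    _ ≤ _ := by gcongr

lemma Zt_le (hd : 0 < d) (n : ℕ) [Finite (Φ.I n)] {C : ℝ}
    (hC : (Nat.card (Φ.I n) : ℝ) * Φ.cmin n ^ (d : ℝ) ≤ C) (h : t' ≤ t) :
    Φ.Zt n t ≤ ENNReal.ofReal (Φ.η ^ (((n - 1 : ℕ) : ℝ) * (t - t')) * C ^ ((t - t') / d))
      * Φ.Zt n t' := by
  have hC0 : 0 ≤ C := Φ.card_mul_cmin_rpow_pos.le.trans hC
  calc Φ.Zt n t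
      = Φ.Z (n - 1) t * ENNReal.ofReal ((Nat.card (Φ.I n) : ℝ) ^ (t / d) * Φ.cmin n ^ t) := rfl
    _ ≤ ENNReal.ofReal (Φ.η ^ (((n - 1 : ℕ) : ℝ) * (t - t'))) * Φ.Z (n - 1) t'
          * ENNReal.ofReal (C ^ ((t - t') / d) *
            ((Nat.card (Φ.I n) : ℝ) ^ (t' / d) * Φ.cmin n ^ t')) :=
        mul_le_mul' (Φ.Z_le _ h)
          (ENNReal.ofReal_le_ofReal (Φ.card_rpow_mul_cmin_rpow_le hd n hC h))
    _ = _ := by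
        rw [Zt, ENNReal.ofReal_mul (p := Φ.η ^ _) (by have := Φ.hη_pos; positivity),
          ENNReal.ofReal_mul (p := C ^ _) (by positivity)]
        ring

end Exponents

section Finite

variable [∀ n, Finite (Φ.I n)]

lemma Z_ne_top (m : ℕ) (t : ℝ) : Φ.Z m t ≠ ⊤ := by
  have := Fintype.ofFinite (Φ.Word 0 m)
  rw [Z, tsum_fintype]
  exact ENNReal.sum_ne_top.mpr fun _ _ => ENNReal.ofReal_ne_top

lemma Zt_pos (n : ℕ) (t : ℝ) : 0 < Φ.Zt n t := by
  have := Φ.card_pos (n := n)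
  have := Φ.cmin_pos (n := n)
  exact ENNReal.mul_pos (Φ.Z_pos _ t).ne' (ENNReal.ofReal_pos.mpr (by positivity)).ne'

lemma Zt_ne_top (n : ℕ) (t : ℝ) : Φ.Zt n t ≠ ⊤ :=
  ENNReal.mul_ne_top (Φ.Z_ne_top _ t) ENNReal.ofReal_ne_top

lemma toReal_Zt_pos (n : ℕ) (t : ℝ) : 0 < (Φ.Zt n t).toReal :=
  ENNReal.toReal_pos (Φ.Zt_pos n t).ne' (Φ.Zt_ne_top n t)

lemma tP_eq_liminf (t : ℝ) :
    Φ.tP t = liminf (fun n : ℕ => ((Real.log (Φ.Zt n t).toReal / n : ℝ) : EReal)) atTop := by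
  simp only [tP, ENNReal.log_pos_real' (Φ.toReal_Zt_pos _ t), ← EReal.coe_mul, div_eq_mul_inv]

lemma log_toReal_Zt_le (hd : 0 < d) (n : ℕ) {C : ℝ}
    (hC : (Nat.card (Φ.I n) : ℝ) * Φ.cmin n ^ (d : ℝ) ≤ C) {t t' : ℝ} (h : t' ≤ t) :
    Real.log (Φ.Zt n t).toReal
      ≤ ((n - 1 : ℕ) : ℝ) * (t - t') * Real.log Φ.η + (t - t') / d * Real.log C
        + Real.log (Φ.Zt n t').toReal := by
  have hη := Φ.hη_pos
  have hC0 : 0 < C := Φ.card_mul_cmin_rpow_pos.trans_le hC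
  have key := ENNReal.toReal_mono (ENNReal.mul_ne_top ENNReal.ofReal_ne_top
    (Φ.Zt_ne_top n t')) (Φ.Zt_le hd n hC h)
  rw [ENNReal.toReal_mul, ENNReal.toReal_ofReal (by positivity)] at key
  calc _ ≤ Real.log (Φ.η ^ (((n - 1 : ℕ) : ℝ) * (t - t')) * C ^ ((t - t') / d)
        * (Φ.Zt n t').toReal) := Real.log_le_log (Φ.toReal_Zt_pos n t) key
    _ = _ := by
      rw [Real.log_mul (by positivity) (Φ.toReal_Zt_pos n t').ne', Real.log_mul (by positivity)
        (by positivity), Real.log_rpow hη, Real.log_rpow hC0]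

end Finite

end NCIFS

theorem NCIFS.tP_strict_anti_general {d : ℕ} (hd : 0 < d) (Φ : NCIFS d) [∀ n, Finite (Φ.I n)]
    (t t' : ℝ) (h : t' < t) :
    Φ.tP t + (((t - t') * Real.log (1 / Φ.η) : ℝ) : EReal) ≤ Φ.tP t' := by
  obtain ⟨C, hC⟩ := Φ.exists_card_mul_cmin_rpow_le
  set a := (t - t') * Real.log (1 / Φ.η)
  set b := a + (t - t') / d * Real.log C
  rw [Φ.tP_eq_liminf, Φ.tP_eq_liminf]
  refine EReal.liminf_add_le_liminf (c := fun n : ℕ => a - b / n) ?_ ?_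
  · simpa using tendsto_const_nhds.sub (tendsto_const_div_atTop_nhds_zero_nat b)
  filter_upwards [eventually_ge_atTop 1] with n hn
  have hn0 : (0 : ℝ) < n := by exact_mod_cast hn
  have hlog := Φ.log_toReal_Zt_le hd n (hC n) h.le
  rw [Nat.cast_sub hn, Nat.cast_one] at hlog
  calc Real.log (Φ.Zt n t).toReal / n + (a - b / n)
      = (Real.log (Φ.Zt n t).toReal + n * a - b) / n := by field_simp; ring
    _ ≤ Real.log (Φ.Zt n t').toReal / n := by
      gcongr
      simp only [a, b, one_div, Real.log_inv]
      linarith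

/-- For a finite NCIFS, the modified pressure
`P̃(t) = liminf (1/n) log Z̃_n(t)` is strictly decreasing where finite: if `t' < t`
(with `t' ≥ 0`) and `P̃(t)` is finite, then `P̃(t') ≥ P̃(t) + (t - t')·log(1/η)`. -/
theorem NCIFS.tP_strict_anti {d : ℕ} (hd : 0 < d) (Φ : NCIFS d) [∀ n, Finite (Φ.I n)]
    (t t' : ℝ) (ht' : 0 ≤ t') (h : t' < t)
    (hfin_top : Φ.tP t ≠ ⊤) (hfin_bot : Φ.tP t ≠ ⊥) :
    Φ.tP t + (((t - t') * Real.log (1 / Φ.η) : ℝ) : EReal) ≤ Φ.tP t' :=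
  NCIFS.tP_strict_anti_general hd Φ t t' h
end
end

section
/- Let Φ be a finite NCIFS, t₀ > 0, and let (α_n) be any sequence with α_n ≥ 1 and α_n → ∞. Then there exists a subsystem Φ_f with index sets I_f^(n) ⊂ I^(n) such that P̲^{Φ_f}(t) = P̲^Φ(t) for all t ≥ t₀, and such that max_{a,b ∈ I_f^(n)} ‖Dφ_a^(n)‖/‖Dφ_b^(n)‖ ≤ α_n·(#I^(n))^{1/t₀} for all n. -/
open Metric Set Filter Topology MeasureTheory
open scoped ENNReal

noncomputable section

/-- The partition function of the subsystem of `Φ` determined by sub-alphabets `If n ⊆ I^{(n)}`. -/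
def NCIFS.Zsub {d : ℕ} (Φ : NCIFS d) (If : ∀ n, Set (Φ.I n)) (n : ℕ) (t : ℝ) : ℝ≥0∞ :=
  ∑' ω : (j : Finset.Ico 0 n) → (If j : Set (Φ.I j)),
    ENNReal.ofReal (Φ.segN 0 n (fun j => (ω j : Φ.I j)) ^ t)

/-!
Keep at level `n` the letters `a` with `c̄_n ≤ γ_n ‖Dφ_a‖`, where `γ_n = α_n (#I^(n))^(1/t₀)`;
the ratio bound is then built in. For the pressure, code a word `ω` by the word `τ` of the
subsystem obtained by replacing each discarded letter with a letter of maximal norm, together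
with the discarded letters themselves. Bounded distortion, applied once per replaced letter,
gives `‖Dφ_ω‖ ≤ ∏_{j discarded} (K²/γ_j) ‖Dφ_τ‖`, hence
`Z_n(t) ≤ Z^f_n(t) ∏_{j<n} (1 + #I^(j) (K²/γ_j)^t)`. For `t ≥ t₀` the `j`-th factor is
`1 + O(α_j^(-t))`, so its logarithm tends to `0`, the Cesàro means of these logarithms vanish,
and the two lower pressures coincide.
-/

theorem ENNReal.tsum_le_tsum_mul_prod_sum {ι : Type*} [Fintype ι] {β γ δ : ι → Type*}
    [∀ i, Fintype (δ i)] (e : ∀ i, β i → γ i × δ i) (he : ∀ i, Function.Injective (e i))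
    (f : (∀ i, β i) → ℝ≥0∞) (g : (∀ i, γ i) → ℝ≥0∞) (w : ∀ i, δ i → ℝ≥0∞)
    (hfg : ∀ ω, f ω ≤ g (fun i => (e i (ω i)).1) * ∏ i, w i (e i (ω i)).2) :
    ∑' ω, f ω ≤ (∑' τ, g τ) * ∏ i, ∑ x, w i x := by
  classical
  have hinj : Function.Injective fun ω : ∀ i, β i =>
      ((fun i => (e i (ω i)).1), fun i => (e i (ω i)).2) := fun ω ω' h =>
    funext fun i => he i (Prod.ext (congrFun (congrArg Prod.fst h) i)
      (congrFun (congrArg Prod.snd h) i))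
  calc ∑' ω, f ω ≤ ∑' ω, g (fun i => (e i (ω i)).1) * ∏ i, w i (e i (ω i)).2 :=
        ENNReal.tsum_le_tsum hfg
    _ ≤ ∑' p : (∀ i, γ i) × (∀ i, δ i), g p.1 * ∏ i, w i (p.2 i) :=
        ENNReal.tsum_comp_le_tsum_of_injective hinj (fun p => g p.1 * ∏ i, w i (p.2 i))
    _ = (∑' τ, g τ) * ∏ i, ∑ x, w i x := by
        rw [ENNReal.tsum_prod', ← ENNReal.tsum_mul_right]
        simp_rw [ENNReal.tsum_mul_left, tsum_fintype, Fintype.prod_sum]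

theorem EReal.liminf_coe_eq_of_le_of_le_add {ι : Type*} {l : Filter ι} [l.NeBot]
    {u v e : ι → ℝ} (huv : ∀ i, u i ≤ v i) (hvu : ∀ i, v i ≤ u i + e i)
    (he : Tendsto e l (𝓝 0)) :
    liminf (fun i => (u i : EReal)) l = liminf (fun i => (v i : EReal)) l := by
  have he' : limsup (fun i => (e i : EReal)) l = 0 :=
    (continuous_coe_real_ereal.tendsto 0 |>.comp he).limsup_eq
  refine le_antisymm (liminf_le_liminf (.of_forall fun i => EReal.coe_le_coe_iff.2 (huv i))) ?_
  calc liminf (fun i => (v i : EReal)) l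
      ≤ liminf ((fun i => (e i : EReal)) + fun i => (u i : EReal)) l :=
        liminf_le_liminf (.of_forall fun i => by
          simpa [add_comm] using EReal.coe_le_coe_iff.2 (hvu i))
    _ ≤ limsup (fun i => (e i : EReal)) l + liminf (fun i => (u i : EReal)) l :=
        EReal.liminf_add_le (by simp [he']) (by simp [he'])
    _ = liminf (fun i => (u i : EReal)) l := by rw [he', zero_add]

theorem ENNReal.liminf_log_mul_inv_eq_of_le_of_le_mul {a b : ℕ → ℝ≥0∞} {C : ℕ → ℝ}
    (hb : ∀ n, b n ≠ 0) (ha : ∀ n, a n ≠ ⊤) (hba : ∀ n, b n ≤ a n)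
    (hab : ∀ n, a n ≤ b n * ENNReal.ofReal (C n))
    (hC : Tendsto (fun n : ℕ => (n : ℝ)⁻¹ * Real.log (C n)) atTop (𝓝 0)) :
    liminf (fun n : ℕ => (b n).log * (((n : ℝ)⁻¹ : ℝ) : EReal)) atTop =
      liminf (fun n : ℕ => (a n).log * (((n : ℝ)⁻¹ : ℝ) : EReal)) atTop := by
  have ha0 n : a n ≠ 0 := ne_bot_of_le_ne_bot (hb n) (hba n)
  have hbtop n : b n ≠ ⊤ := ne_top_of_le_ne_top (ha n) (hba n)
  have hCpos n : 0 < C n := by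
    by_contra! h
    exact ha0 n (by simpa [ENNReal.ofReal_of_nonpos h] using hab n)
  have hlog (n : ℕ) (x : ℝ≥0∞) (h0 : x ≠ 0) (htop : x ≠ ⊤) :
      x.log * (((n : ℝ)⁻¹ : ℝ) : EReal) = ((Real.log x.toReal * (n : ℝ)⁻¹ : ℝ) : EReal) := by
    rw [ENNReal.log_pos_real h0 htop, EReal.coe_mul]
  simp_rw [fun n => hlog n (b n) (hb n) (hbtop n), fun n => hlog n (a n) (ha0 n) (ha n)]
  refine EReal.liminf_coe_eq_of_le_of_le_add (fun n => ?_) (fun n => ?_) hC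
  · gcongr
    · exact ENNReal.toReal_pos (hb n) (hbtop n)
    · exact ha n
    · exact hba n
  · have h := ENNReal.toReal_mono (ENNReal.mul_ne_top (hbtop n) ENNReal.ofReal_ne_top) (hab n)
    rw [ENNReal.toReal_mul, ENNReal.toReal_ofReal (hCpos n).le] at h
    have hle := Real.log_le_log (ENNReal.toReal_pos (ha0 n) (ha n)) h
    rw [Real.log_mul (ENNReal.toReal_pos (hb n) (hbtop n)).ne' (hCpos n).ne'] at hle
    nlinarith [inv_nonneg.2 (Nat.cast_nonneg (α := ℝ) n)]

theorem tendsto_inv_mul_log_prod_one_add {δ : ℕ → ℝ} (hδ0 : ∀ n, 0 ≤ δ n)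
    (hδ : Tendsto δ atTop (𝓝 0)) :
    Tendsto (fun n : ℕ => (n : ℝ)⁻¹ * Real.log (∏ j ∈ Finset.range n, (1 + δ j)))
      atTop (𝓝 0) := by
  have hlog : Tendsto (fun j => Real.log (1 + δ j)) atTop (𝓝 0) := by
    have h1 : Tendsto (fun j => 1 + δ j) atTop (𝓝 1) := by
      simpa using tendsto_const_nhds.add hδ
    simpa [Function.comp_def] using (Real.continuousAt_log one_ne_zero).tendsto.comp h1
  refine hlog.cesaro.congr fun n => ?_
  rw [Real.log_prod fun j _ => by linarith [hδ0 j]]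

lemma Real.mul_rpow_div_mul_rpow_le {N α k t₀ t : ℝ} (hN : 1 ≤ N) (hα : 0 < α) (hk : 0 ≤ k)
    (ht₀ : 0 < t₀) (ht : t₀ ≤ t) :
    N * (k / (α * N ^ (1 / t₀))) ^ t ≤ k ^ t * α ^ (-t) := by
  have hN0 : 0 < N := zero_lt_one.trans_le hN
  have hNt : N ≤ N ^ (1 / t₀ * t) := by
    simpa using Real.rpow_le_rpow_of_exponent_le hN (show (1 : ℝ) ≤ 1 / t₀ * t by
      rw [one_div_mul_eq_div, le_div_iff₀ ht₀]; linarith)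
  rw [Real.div_rpow hk (by positivity), Real.mul_rpow hα.le (by positivity),
    ← Real.rpow_mul hN0.le, Real.rpow_neg hα.le]
  have hNt0 : 0 < N ^ (1 / t₀ * t) := by positivity
  calc N * (k ^ t / (α ^ t * N ^ (1 / t₀ * t)))
      = k ^ t * (α ^ t)⁻¹ * (N / N ^ (1 / t₀ * t)) := by field_simp
    _ ≤ k ^ t * (α ^ t)⁻¹ * 1 := by gcongr; exact div_le_one_of_le₀ hNt hNt0.le
    _ = k ^ t * (α ^ t)⁻¹ := mul_one _

namespace NCIFS

variable {d : ℕ} (Φ : NCIFS d)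

def restrict {m n k l : ℕ} (ω : Φ.Word m n) (h : Finset.Ico k l ⊆ Finset.Ico m n) :
    Φ.Word k l :=
  fun p => ω ⟨p, h p.2⟩

lemma segN_restrict_eq_Dnorm {m j n : ℕ} (hmj : m ≤ j) (hjn : j < n) (ω : Φ.Word m n) :
    Φ.segN j (j + 1) (Φ.restrict ω (Finset.Ico_subset_Ico hmj hjn)) =
      Φ.Dnorm j (ω ⟨j, Finset.mem_Ico.2 ⟨hmj, hjn⟩⟩) := by
  unfold Dnorm
  congr 1
  funext ⟨p, hp⟩
  obtain rfl : j = p := by have := Finset.mem_Ico.1 hp; omega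
  rfl

lemma restrict_restrict {m n k l k' l' : ℕ} (ω : Φ.Word m n) (h : Finset.Ico k l ⊆ Finset.Ico m n)
    (h' : Finset.Ico k' l' ⊆ Finset.Ico k l) :
    Φ.restrict (Φ.restrict ω h) h' = Φ.restrict ω (h'.trans h) :=
  rfl

lemma segN_le_mul_restrict {m k n : ℕ} (hmk : m ≤ k) (hkn : k ≤ n) (ω : Φ.Word m n) :
    Φ.segN m n ω ≤ Φ.segN m k (Φ.restrict ω (Finset.Ico_subset_Ico_right hkn)) *
      Φ.segN k n (Φ.restrict ω (Finset.Ico_subset_Ico_left hmk)) :=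
  (Φ.segN_split m k n hmk hkn ω _ _ (fun _ _ _ => rfl) (fun _ _ _ => rfl)).1

lemma mul_restrict_le_segN {m k n : ℕ} (hmk : m ≤ k) (hkn : k ≤ n) (ω : Φ.Word m n) :
    Φ.segN m k (Φ.restrict ω (Finset.Ico_subset_Ico_right hkn)) *
      Φ.segN k n (Φ.restrict ω (Finset.Ico_subset_Ico_left hmk)) ≤ Φ.K * Φ.segN m n ω :=
  (Φ.segN_split m k n hmk hkn ω _ _ (fun _ _ _ => rfl) (fun _ _ _ => rfl)).2

lemma segN_le_mul_Dnorm_mul {m j n : ℕ} (hmj : m ≤ j) (hjn : j < n) (ω : Φ.Word m n) :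
    Φ.segN m n ω ≤ Φ.segN m j (Φ.restrict ω (Finset.Ico_subset_Ico_right hjn.le)) *
      Φ.Dnorm j (ω ⟨j, Finset.mem_Ico.2 ⟨hmj, hjn⟩⟩) *
      Φ.segN (j + 1) n (Φ.restrict ω (Finset.Ico_subset_Ico_left (hmj.trans j.le_succ))) := by
  have h₂ := Φ.segN_le_mul_restrict j.le_succ hjn (Φ.restrict ω (Finset.Ico_subset_Ico_left hmj))
  rw [restrict_restrict, restrict_restrict, Φ.segN_restrict_eq_Dnorm hmj hjn] at h₂
  rw [mul_assoc]
  exact (Φ.segN_le_mul_restrict hmj hjn.le ω).trans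
    (mul_le_mul_of_nonneg_left h₂ (Φ.segN_pos _ _ _).le)

lemma mul_Dnorm_mul_le_segN {m j n : ℕ} (hmj : m ≤ j) (hjn : j < n) (ω : Φ.Word m n) :
    Φ.segN m j (Φ.restrict ω (Finset.Ico_subset_Ico_right hjn.le)) *
      Φ.Dnorm j (ω ⟨j, Finset.mem_Ico.2 ⟨hmj, hjn⟩⟩) *
      Φ.segN (j + 1) n (Φ.restrict ω (Finset.Ico_subset_Ico_left (hmj.trans j.le_succ))) ≤
        Φ.K ^ 2 * Φ.segN m n ω := by
  have h₁ := Φ.mul_restrict_le_segN hmj hjn.le ω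
  have h₂ := Φ.mul_restrict_le_segN j.le_succ hjn (Φ.restrict ω (Finset.Ico_subset_Ico_left hmj))
  rw [restrict_restrict, restrict_restrict, Φ.segN_restrict_eq_Dnorm hmj hjn] at h₂
  nlinarith [mul_le_mul_of_nonneg_left h₂
      (Φ.segN_pos m j (Φ.restrict ω (Finset.Ico_subset_Ico_right hjn.le))).le,
    mul_le_mul_of_nonneg_left h₁ (zero_le_one.trans Φ.hK)]

lemma segN_le_mul_segN_of_forall_ne {m n : ℕ} (ω τ : Φ.Word m n) (j : Finset.Ico m n)
    (hωτ : ∀ p, p ≠ j → ω p = τ p) :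
    Φ.segN m n ω ≤ Φ.K ^ 2 * (Φ.Dnorm j (ω j) / Φ.Dnorm j (τ j)) * Φ.segN m n τ := by
  obtain ⟨hmj, hjn⟩ := Finset.mem_Ico.1 j.2
  have hL : Φ.restrict ω (Finset.Ico_subset_Ico_right hjn.le) =
      Φ.restrict τ (Finset.Ico_subset_Ico_right hjn.le) := by
    funext p
    exact hωτ _ fun h => by have := Finset.mem_Ico.1 p.2; simp [← h] at this
  have hB : Φ.restrict ω (Finset.Ico_subset_Ico_left (hmj.trans (Nat.le_succ _))) =
      Φ.restrict τ (Finset.Ico_subset_Ico_left (hmj.trans (Nat.le_succ _))) := by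
    funext p
    exact hωτ _ fun h => by have := Finset.mem_Ico.1 p.2; simp [← h] at this
  have hω := Φ.segN_le_mul_Dnorm_mul hmj hjn ω
  have hτ := Φ.mul_Dnorm_mul_le_segN hmj hjn τ
  rw [hL, hB] at hω
  have hτj := Φ.Dnorm_pos j (τ j)
  calc Φ.segN m n ω ≤ Φ.Dnorm j (ω j) / Φ.Dnorm j (τ j) *
        (Φ.segN m j (Φ.restrict τ (Finset.Ico_subset_Ico_right hjn.le)) * Φ.Dnorm j (τ j) *
          Φ.segN (j + 1) n
            (Φ.restrict τ (Finset.Ico_subset_Ico_left (hmj.trans (Nat.le_succ _))))) := by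
        convert hω using 1; field_simp
    _ ≤ Φ.Dnorm j (ω j) / Φ.Dnorm j (τ j) * (Φ.K ^ 2 * Φ.segN m n τ) := by
        gcongr
        exact (div_pos (Φ.Dnorm_pos _ _) hτj).le
    _ = _ := by ring

lemma segN_le_prod_mul_segN {m n : ℕ} (D : Finset (Finset.Ico m n)) (ω τ : Φ.Word m n)
    (hωτ : ∀ p ∉ D, ω p = τ p) :
    Φ.segN m n ω ≤ (∏ p ∈ D, Φ.K ^ 2 * (Φ.Dnorm p (ω p) / Φ.Dnorm p (τ p))) * Φ.segN m n τ := by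
  classical
  induction D using Finset.induction_on generalizing ω with
  | empty =>
    rw [funext fun p => hωτ p (Finset.notMem_empty p), Finset.prod_empty, one_mul]
  | @insert j D hjD ih =>
    obtain ⟨σ, hσj, hσω⟩ : ∃ σ : Φ.Word m n, σ j = τ j ∧ ∀ p, p ≠ j → σ p = ω p :=
      ⟨Function.update ω j (τ j), Function.update_self .., fun p hp => Function.update_of_ne hp ..⟩
    have hσ : Φ.segN m n σ ≤
        (∏ p ∈ D, Φ.K ^ 2 * (Φ.Dnorm p (ω p) / Φ.Dnorm p (τ p))) * Φ.segN m n τ := by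
      refine (ih σ fun p hp => ?_).trans_eq ?_
      · by_cases hpj : p = j
        · rw [hpj, hσj]
        · rw [hσω p hpj]
          exact hωτ p (by simp [hpj, hp])
      · congr 1
        refine Finset.prod_congr rfl fun p hp => ?_
        rw [hσω p (ne_of_mem_of_not_mem hp hjD)]
    have hωσ := Φ.segN_le_mul_segN_of_forall_ne ω σ j fun p hp => (hσω p hp).symm
    rw [hσj] at hωσ
    rw [Finset.prod_insert hjD, mul_assoc]
    have := Φ.Dnorm_pos j (ω j); have := Φ.Dnorm_pos j (τ j)
    exact hωσ.trans (by gcongr)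

open Classical in
lemma segN_le_prod_mul_segN_retract {m n : ℕ} (If : ∀ n, Set (Φ.I n)) (s : ∀ n, If n) {c : ℕ → ℝ}
    (hc : ∀ n, ∀ a ∉ If n, Φ.K ^ 2 * (Φ.Dnorm n a / Φ.Dnorm n (s n)) ≤ c n)
    (ω : Φ.Word m n) :
    Φ.segN m n ω ≤ (∏ p ∈ Finset.univ.filter fun p : Finset.Ico m n => ω p ∉ If p, c p) *
      Φ.segN m n (fun p => if ω p ∈ If p then ω p else s p) := by
  refine (Φ.segN_le_prod_mul_segN (Finset.univ.filter fun p => ω p ∉ If p) ω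
    (fun p => if ω p ∈ If p then ω p else s p) fun p hp => ?_).trans ?_
  · simp only [Finset.mem_filter, Finset.mem_univ, true_and, not_not] at hp
    simp [hp]
  · gcongr with p hp
    · exact (Φ.segN_pos _ _ _).le
    · intro p _
      have := Φ.Dnorm_pos p (ω p); have := Φ.Dnorm_pos p (if ω p ∈ If p then ω p else s p)
      positivity
    · simp only [Finset.mem_filter, Finset.mem_univ, true_and] at hp
      simpa [hp] using hc p (ω p) hp

open Classical in
lemma ofReal_segN_rpow_le_prod_mul {m n : ℕ} (If : ∀ n, Set (Φ.I n)) (s : ∀ n, If n)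
    {c : ℕ → ℝ} (hc0 : ∀ n, 0 ≤ c n)
    (hc : ∀ n, ∀ a ∉ If n, Φ.K ^ 2 * (Φ.Dnorm n a / Φ.Dnorm n (s n)) ≤ c n) {t : ℝ} (ht : 0 ≤ t)
    (ω : Φ.Word m n) :
    ENNReal.ofReal (Φ.segN m n ω ^ t) ≤
      (∏ p ∈ Finset.univ.filter fun p : Finset.Ico m n => ω p ∉ If p, ENNReal.ofReal (c p ^ t)) *
        ENNReal.ofReal (Φ.segN m n (fun p => if ω p ∈ If p then ω p else s p) ^ t) := by
  have hprod : 0 ≤ ∏ p ∈ Finset.univ.filter fun p : Finset.Ico m n => ω p ∉ If p, c p :=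
    Finset.prod_nonneg fun p _ => hc0 p
  rw [← ENNReal.ofReal_prod_of_nonneg fun (p : Finset.Ico m n) _ => Real.rpow_nonneg (hc0 p) t,
    Real.finsetProd_rpow _ (fun p : Finset.Ico m n => c p) (fun p _ => hc0 p),
    ← ENNReal.ofReal_mul (Real.rpow_nonneg hprod t), ← Real.mul_rpow hprod (Φ.segN_pos _ _ _).le]
  gcongr
  · exact (Φ.segN_pos _ _ _).le
  · exact Φ.segN_le_prod_mul_segN_retract If s hc ω

lemma Z_le_Zsub_mul [∀ n, Finite (Φ.I n)] (If : ∀ n, Set (Φ.I n)) (s : ∀ n, If n) {c : ℕ → ℝ}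
    (hc0 : ∀ n, 0 ≤ c n) (hc : ∀ n, ∀ a ∉ If n, Φ.K ^ 2 * (Φ.Dnorm n a / Φ.Dnorm n (s n)) ≤ c n)
    {t : ℝ} (ht : 0 ≤ t) (n : ℕ) :
    Φ.Z n t ≤ Φ.Zsub If n t *
      ENNReal.ofReal (∏ j ∈ Finset.range n, (1 + Nat.card ↥(If j)ᶜ * c j ^ t)) := by
  classical
  have := fun j => Fintype.ofFinite (Φ.I j)
  let e (j : Finset.Ico 0 n) (x : Φ.I j) : If j × Option ↥(If j)ᶜ :=
    if h : x ∈ If j then (⟨x, h⟩, none) else (s j, some ⟨x, h⟩)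
  let w (j : Finset.Ico 0 n) (o : Option ↥(If j)ᶜ) : ℝ≥0∞ :=
    o.elim 1 fun _ => ENNReal.ofReal (c j ^ t)
  have he j : Function.Injective (e j) := by
    intro x y hxy
    by_cases hx : x ∈ If j <;> by_cases hy : y ∈ If j <;> simp_all [e]
  have hw j : ∑ o, w j o = ENNReal.ofReal (1 + Nat.card ↥(If j)ᶜ * c j ^ t) := by
    rw [Fintype.sum_option, ENNReal.ofReal_add zero_le_one (by have := hc0 j; positivity),
      ENNReal.ofReal_mul (Nat.cast_nonneg _)]
    simp [w, Nat.card_eq_fintype_card]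
  have hterm ω : ENNReal.ofReal (Φ.segN 0 n ω ^ t) ≤
      ENNReal.ofReal (Φ.segN 0 n (fun j => ((e j (ω j)).1 : Φ.I j)) ^ t) *
        ∏ j, w j (e j (ω j)).2 := by
    have hτ : (fun j : Finset.Ico 0 n => ((e j (ω j)).1 : Φ.I j)) =
        fun j : Finset.Ico 0 n => if ω j ∈ If j then ω j else s j := by
      funext j; by_cases h : ω j ∈ If j <;> simp [e, h]
    have hw' : ∏ j, w j (e j (ω j)).2 =
        ∏ j ∈ Finset.univ.filter fun j : Finset.Ico 0 n => ω j ∉ If j,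
          ENNReal.ofReal (c j ^ t) := by
      rw [Finset.prod_filter]
      refine Finset.prod_congr rfl fun j _ => ?_
      by_cases h : ω j ∈ If j <;> simp [e, w, h]
    rw [hτ, hw', mul_comm]
    exact Φ.ofReal_segN_rpow_le_prod_mul If s hc0 hc ht ω
  calc Φ.Z n t ≤ Φ.Zsub If n t * ∏ j, ∑ o, w j o :=
        ENNReal.tsum_le_tsum_mul_prod_sum e he _ _ w hterm
    _ = _ := by
        simp_rw [hw]
        rw [← ENNReal.ofReal_prod_of_nonneg fun j _ => by have := hc0 j; positivity,
          Finset.prod_coe_sort (Finset.Ico 0 n) fun j => 1 + Nat.card ↥(If j)ᶜ * c j ^ t,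
          Finset.range_eq_Ico]

lemma Zsub_le_Z (If : ∀ n, Set (Φ.I n)) (n : ℕ) (t : ℝ) : Φ.Zsub If n t ≤ Φ.Z n t :=
  ENNReal.tsum_comp_le_tsum_of_injective
    (f := fun (τ : (j : Finset.Ico 0 n) → If j) (j : Finset.Ico 0 n) => (τ j : Φ.I j))
    (fun _ _ h => funext fun j => Subtype.ext (congrFun h j))
    fun ω => ENNReal.ofReal (Φ.segN 0 n ω ^ t)

lemma Zsub_ne_zero (If : ∀ n, Set (Φ.I n)) (s : ∀ n, If n) (n : ℕ) (t : ℝ) :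
    Φ.Zsub If n t ≠ 0 :=
  (ENNReal.ofReal_pos.2 (Real.rpow_pos_of_pos (Φ.segN_pos _ _ _) t) |>.trans_le
    (ENNReal.le_tsum fun j : Finset.Ico 0 n => s j)).ne'

lemma Z_ne_top_s13 [∀ n, Finite (Φ.I n)] (n : ℕ) (t : ℝ) : Φ.Z n t ≠ ⊤ := by
  have := fun j => Fintype.ofFinite (Φ.I j)
  rw [Z, tsum_fintype]
  exact ENNReal.sum_ne_top.2 fun _ _ => ENNReal.ofReal_ne_top

theorem liminf_Zsub_eq_lowP [∀ n, Finite (Φ.I n)] (If : ∀ n, Set (Φ.I n)) (s : ∀ n, If n)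
    {c : ℕ → ℝ} (hc0 : ∀ n, 0 ≤ c n)
    (hc : ∀ n, ∀ a ∉ If n, Φ.K ^ 2 * (Φ.Dnorm n a / Φ.Dnorm n (s n)) ≤ c n) {t : ℝ} (ht : 0 ≤ t)
    (hδ : Tendsto (fun n => Nat.card ↥(If n)ᶜ * c n ^ t) atTop (𝓝 0)) :
    liminf (fun n : ℕ => (Φ.Zsub If n t).log * (((n : ℝ)⁻¹ : ℝ) : EReal)) atTop = Φ.lowP t :=
  ENNReal.liminf_log_mul_inv_eq_of_le_of_le_mul (fun n => Φ.Zsub_ne_zero If s n t)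
    (fun n => Φ.Z_ne_top_s13 n t) (fun n => Φ.Zsub_le_Z If n t) (Φ.Z_le_Zsub_mul If s hc0 hc ht)
    (tendsto_inv_mul_log_prod_one_add (fun n => by have := hc0 n; positivity) hδ)

def balancedLetters (γ : ℕ → ℝ) (n : ℕ) : Set (Φ.I n) := {a | Φ.cmax n ≤ γ n * Φ.Dnorm n a}

variable {Φ}

lemma mem_balancedLetters_of_Dnorm_eq_cmax {γ : ℕ → ℝ} {n : ℕ} (hγ : 1 ≤ γ n) {a : Φ.I n}
    (ha : Φ.Dnorm n a = Φ.cmax n) : a ∈ Φ.balancedLetters γ n :=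
  show Φ.cmax n ≤ _ from ha ▸ le_mul_of_one_le_left (Φ.Dnorm_pos _ _).le hγ

variable [∀ n, Finite (Φ.I n)]

lemma Dnorm_le_cmax (n : ℕ) (a : Φ.I n) : Φ.Dnorm n a ≤ Φ.cmax n :=
  le_ciSup (Set.finite_range _).bddAbove a

lemma exists_Dnorm_eq_cmax (n : ℕ) : ∃ a, Φ.Dnorm n a = Φ.cmax n :=
  have := Φ.hI_ne n; exists_eq_ciSup_of_finite

lemma div_le_of_mem_balancedLetters {γ : ℕ → ℝ} {n : ℕ} (a : Φ.I n) {b : Φ.I n}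
    (hb : b ∈ Φ.balancedLetters γ n) : Φ.Dnorm n a / Φ.Dnorm n b ≤ γ n :=
  (div_le_iff₀ (Φ.Dnorm_pos _ _)).2 ((Φ.Dnorm_le_cmax n a).trans hb)

theorem liminf_Zsub_balancedLetters {γ : ℕ → ℝ} (hγ : ∀ n, 1 ≤ γ n) {t : ℝ} (ht : 0 ≤ t)
    (hδ : Tendsto (fun n => Nat.card (Φ.I n) * (Φ.K ^ 2 / γ n) ^ t) atTop (𝓝 0)) :
    liminf (fun n : ℕ => (Φ.Zsub (Φ.balancedLetters γ) n t).log * (((n : ℝ)⁻¹ : ℝ) : EReal))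
      atTop = Φ.lowP t := by
  choose M hM using exists_Dnorm_eq_cmax (Φ := Φ)
  have hγ0 n : 0 < γ n := zero_lt_one.trans_le (hγ n)
  have hc0 n : 0 ≤ Φ.K ^ 2 / γ n := div_nonneg (sq_nonneg _) (hγ0 n).le
  refine Φ.liminf_Zsub_eq_lowP _
    (fun n => ⟨M n, mem_balancedLetters_of_Dnorm_eq_cmax (hγ n) (hM n)⟩) hc0
    (fun n a ha => ?_) ht ?_
  · have hlt : γ n * Φ.Dnorm n a < Φ.Dnorm n (M n) := hM n ▸ not_le.1 ha
    rw [div_eq_mul_one_div (Φ.K ^ 2)]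
    refine mul_le_mul_of_nonneg_left ?_ (sq_nonneg _)
    rw [div_le_div_iff₀ (Φ.Dnorm_pos _ _) (hγ0 n)]
    linarith
  · refine squeeze_zero (fun n => mul_nonneg (Nat.cast_nonneg _) (Real.rpow_nonneg (hc0 n) _))
      (fun n => mul_le_mul_of_nonneg_right ?_ (Real.rpow_nonneg (hc0 n) _)) hδ
    exact_mod_cast Finite.card_subtype_le _

end NCIFS

/-- (Balance from growth restrictions.) Let `Φ` be a finite NCIFS, `t₀ > 0`,
and `(α_n)` any sequence with `α_n ≥ 1`, `α_n → ∞`. Then there is a subsystem `Φ_f`, given by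
index sets `I_f^{(n)} ⊆ I^{(n)}`, with `P̲^{Φ_f}(t) = P̲^Φ(t)` for all `t ≥ t₀` and
`‖Dφ_a^{(n)}‖/‖Dφ_b^{(n)}‖ ≤ α_n·(#I^{(n)})^{1/t₀}` for all `a, b ∈ I_f^{(n)}` and all `n`. -/
theorem NCIFS.balanced_subsystem {d : ℕ} (Φ : NCIFS d) [∀ n, Finite (Φ.I n)]
    (t₀ : ℝ) (ht₀ : 0 < t₀) (α : ℕ → ℝ) (hα1 : ∀ n, 1 ≤ α n)
    (hα : Tendsto α atTop atTop) :
    ∃ If : ∀ n, Set (Φ.I n), (∀ n, (If n).Nonempty) ∧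
      (∀ t : ℝ, t₀ ≤ t →
        liminf (fun n : ℕ => (Φ.Zsub If n t).log * (((n : ℝ)⁻¹ : ℝ) : EReal)) atTop =
          Φ.lowP t) ∧
      (∀ n, ∀ a ∈ If n, ∀ b ∈ If n,
        Φ.Dnorm n a / Φ.Dnorm n b ≤ α n * (Nat.card (Φ.I n) : ℝ) ^ (1 / t₀)) := by
  have hN1 n : (1 : ℝ) ≤ Nat.card (Φ.I n) := by
    have := Φ.hI_ne n; exact_mod_cast Nat.card_pos
  have hγ n : 1 ≤ α n * (Nat.card (Φ.I n) : ℝ) ^ (1 / t₀) :=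
    one_le_mul_of_one_le_of_one_le (hα1 n) (Real.one_le_rpow (hN1 n) (by positivity))
  refine ⟨Φ.balancedLetters fun n => α n * (Nat.card (Φ.I n) : ℝ) ^ (1 / t₀),
    fun n => ⟨_, mem_balancedLetters_of_Dnorm_eq_cmax (hγ n) (exists_Dnorm_eq_cmax n).choose_spec⟩,
    fun t ht => liminf_Zsub_balancedLetters hγ (ht₀.le.trans ht) ?_,
    fun n a _ b hb => div_le_of_mem_balancedLetters a hb⟩
  refine squeeze_zero (fun n => mul_nonneg (Nat.cast_nonneg _) (Real.rpow_nonneg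
      (div_nonneg (sq_nonneg _) (zero_le_one.trans (hγ n))) _))
    (fun n => Real.mul_rpow_div_mul_rpow_le (hN1 n) (zero_lt_one.trans_le (hα1 n)) (sq_nonneg _)
      ht₀ ht) ?_
  simpa using ((tendsto_rpow_neg_atTop (ht₀.trans_le ht)).comp hα).const_mul ((Φ.K ^ 2) ^ t)
end
end

section
/- Consider the perfectly balanced periodic system Ψ on X = [0,1] with period m ≥ 2 and parameter 0 < t₂ < 1, defined by Ψ^(ℓ) = {x ↦ x/2, x ↦ (x+1)/2} if m divides ℓ, and Ψ^(ℓ) = {x ↦ λx} otherwise, where λ = 2^{-(1-t₂)/(t₂(m-1))}. Then λ^{t₂(m-1)} ≤ Z_n^Ψ(t₂) ≤ 1 for all n, hence lim_{n→∞} (1/n) log Z_n^Ψ(t₂) = 0, so B(Ψ) = t₂. -/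
open Metric Set Filter Topology MeasureTheory
open scoped ENNReal

noncomputable section

lemma prodIteAux (m : ℕ) (a b : ℝ) (n : ℕ) :
    ∏ j ∈ Finset.range n, (if m ∣ (j+1) then a else b) = a ^ (n / m) * b ^ (n - n / m) := by
  induction n with
  | zero => simp
  | succ n ih =>
    rw [Finset.prod_range_succ, ih, Nat.succ_div]
    have hle : n / m ≤ n := Nat.div_le_self n m
    by_cases h : m ∣ n + 1
    · have h2 : n + 1 - (n / m + 1) = n - n / m := by omega
      simp only [h, if_true, h2, pow_succ]; ring
    · have h2 : n + 1 - (n / m + 0) = (n - n / m) + 1 := by omega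
      simp only [h, if_false, h2, pow_succ]; ring

lemma keyZ {m : ℕ} (lam : ℝ) (hlampos : 0 < lam)
    (Ψ : NCIFS 1) [∀ n, Finite (Ψ.I n)]
    (hcard : ∀ j : ℕ, Nat.card (Ψ.I j) = if m ∣ (j + 1) then 2 else 1)
    (hD : ∀ (j : ℕ) (i : Ψ.I j), Ψ.Dnorm j i = if m ∣ (j + 1) then 1 / 2 else lam)
    (hmult : ∀ (n : ℕ) (ω : Ψ.Word 0 n),
      Ψ.segN 0 n ω = ∏ j : Finset.Ico 0 n, Ψ.Dnorm j (ω j))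
    (n : ℕ) (t : ℝ) : Ψ.Z n t
    = ENNReal.ofReal ((2 * (1/2:ℝ) ^ t) ^ (n / m) * (lam ^ t) ^ (n - n / m)) := by
  letI : Fintype (Ψ.Word 0 n) := Fintype.ofFinite _
  set P : ℝ := ∏ j ∈ Finset.range n, (if m ∣ (j+1) then (1/2:ℝ) else lam) with hP
  have hPpos : 0 < P := Finset.prod_pos fun j _ => by split_ifs <;> [norm_num; exact hlampos]
  have hseg : ∀ ω : Ψ.Word 0 n, Ψ.segN 0 n ω = P := by
    intro ω
    rw [hmult n ω]
    calc (∏ j : Finset.Ico 0 n, Ψ.Dnorm j (ω j))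
        = ∏ j : Finset.Ico 0 n, (if m ∣ ((j:ℕ)+1) then (1/2:ℝ) else lam) :=
          Finset.prod_congr rfl (fun j _ => hD j (ω j))
      _ = ∏ j ∈ Finset.Ico 0 n, (if m ∣ (j+1) then (1/2:ℝ) else lam) :=
          Finset.prod_coe_sort (Finset.Ico 0 n) (fun j => if m ∣ (j+1) then (1/2:ℝ) else lam)
      _ = P := by rw [hP, Finset.range_eq_Ico]
  have hcardW : (Nat.card (Ψ.Word 0 n) : ℝ)
      = ∏ j ∈ Finset.range n, (if m ∣ (j+1) then (2:ℝ) else 1) := by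
    rw [Nat.card_pi]
    push_cast
    rw [Finset.prod_coe_sort (Finset.Ico 0 n) (fun j => ((Nat.card (Ψ.I j) : ℝ)))]
    rw [Finset.range_eq_Ico]
    refine Finset.prod_congr rfl (fun j _ => ?_)
    rw [hcard j]
    split <;> norm_num
  rw [NCIFS.Z, tsum_fintype]
  rw [Finset.sum_congr rfl ((fun ω _ => by rw [hseg ω]) :
    ∀ ω ∈ Finset.univ (α := Ψ.Word 0 n), ENNReal.ofReal (Ψ.segN 0 n ω ^ t)
      = ENNReal.ofReal (P ^ t))]
  rw [Finset.sum_const, nsmul_eq_mul, Finset.card_univ, ← Nat.card_eq_fintype_card,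
    ← ENNReal.ofReal_natCast, ← ENNReal.ofReal_mul (by positivity)]
  congr 1
  rw [hcardW, hP, ← Real.finset_prod_rpow _ _
    (fun j _ => by split_ifs <;> [norm_num; exact hlampos.le]) t,
    ← Finset.prod_mul_distrib, ← prodIteAux m (2 * (1/2:ℝ)^t) (lam^t) n]
  refine Finset.prod_congr rfl (fun j _ => ?_)
  by_cases h : m ∣ j + 1 <;> simp [h]

/-- Consider a perfectly balanced periodic system `Ψ` of similarities on
`[0,1] ⊂ ℝ` with period `m ≥ 2` and parameter `0 < t₂ < 1`: at each level `ℓ` divisible by `m`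
(levels counted from `1`, so here level `ℓ` is index `j` with `ℓ = j+1`) there are two maps of
contraction ratio `1/2`, and at every other level a single map of ratio
`λ = 2^{-(1-t₂)/(t₂(m-1))}`. Then `λ^{t₂(m-1)} ≤ Z_n(t₂) ≤ 1` for all `n`, hence
`(1/n) log Z_n(t₂) → 0` and `B(Ψ) = t₂`. -/
theorem NCIFS.periodic_example {m : ℕ} (hm : 2 ≤ m) (t₂ : ℝ) (ht₂ : 0 < t₂) (ht₂' : t₂ < 1)
    (lam : ℝ) (hlam : lam = (2 : ℝ) ^ (-((1 - t₂) / (t₂ * ((m : ℝ) - 1)))))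
    (Ψ : NCIFS 1) [∀ n, Finite (Ψ.I n)]
    (hcard : ∀ j : ℕ, Nat.card (Ψ.I j) = if m ∣ (j + 1) then 2 else 1)
    (hD : ∀ (j : ℕ) (i : Ψ.I j), Ψ.Dnorm j i = if m ∣ (j + 1) then 1 / 2 else lam)
    (hmult : ∀ (n : ℕ) (ω : Ψ.Word 0 n),
      Ψ.segN 0 n ω = ∏ j : Finset.Ico 0 n, Ψ.Dnorm j (ω j)) :
    (∀ n : ℕ, ENNReal.ofReal (lam ^ (t₂ * ((m : ℝ) - 1))) ≤ Ψ.Z n t₂ ∧ Ψ.Z n t₂ ≤ 1) ∧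
    Tendsto (fun n : ℕ => (Ψ.Z n t₂).log * (((n : ℝ)⁻¹ : ℝ) : EReal)) atTop (𝓝 0) ∧
    Ψ.Bdim = ENNReal.ofReal t₂ := by
  have hm1 : (1:ℝ) ≤ (m:ℝ) - 1 := by
    have h2 : (2:ℝ) ≤ (m:ℝ) := by exact_mod_cast hm
    linarith
  have hm10 : (m:ℝ) - 1 ≠ 0 := by linarith
  have hm0 : (m:ℝ) ≠ 0 := by linarith
  have ht0 : t₂ ≠ 0 := ne_of_gt ht₂
  set c : ℝ := (1 - t₂) / (t₂ * ((m : ℝ) - 1)) with hc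
  have hlampos : 0 < lam := by rw [hlam]; exact Real.rpow_pos_of_pos (by norm_num) _
  -- cast of quotient
  have hq : ∀ n : ℕ, ((n / m : ℕ) : ℝ) = ((n:ℝ) - ((n % m : ℕ) : ℝ)) / m := by
    intro n
    have h := Nat.div_add_mod n m
    have h' : ((m:ℝ)) * ((n / m : ℕ):ℝ) + ((n % m : ℕ):ℝ) = (n:ℝ) := by exact_mod_cast h
    field_simp
    linarith
  -- the exponent identity
  have heq : ∀ (t : ℝ) (n : ℕ),
      (1 - t) * ((n / m : ℕ):ℝ) - c * t * ((n:ℝ) - ((n / m : ℕ):ℝ))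
        = (1 - t / t₂) / m * (n:ℝ) - (1 - t + c * t) / m * ((n % m : ℕ):ℝ) := by
    intro t n
    rw [hq n, hc]
    field_simp
    ring
  -- Z in power-of-2 form
  have hA : ∀ t : ℝ, 2 * (1/2:ℝ) ^ t = (2:ℝ) ^ (1 - t) := by
    intro t
    have h1 : ((1:ℝ)/2) ^ t = (2:ℝ) ^ (-t) := by
      rw [Real.rpow_neg (by norm_num), one_div, Real.inv_rpow (by norm_num)]
    rw [h1, show (1:ℝ) - t = 1 + (-t) by ring, Real.rpow_add (by norm_num), Real.rpow_one]
  have hB : ∀ t : ℝ, lam ^ t = (2:ℝ) ^ (-(c * t)) := by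
    intro t
    rw [hlam, ← Real.rpow_mul (by norm_num)]
    congr 1
    ring
  have key2 : ∀ (n : ℕ) (t : ℝ), Ψ.Z n t = ENNReal.ofReal ((2:ℝ) ^
      ((1 - t) * ((n / m : ℕ):ℝ) - c * t * ((n:ℝ) - ((n / m : ℕ):ℝ)))) := by
    intro n t
    rw [keyZ lam hlampos Ψ hcard hD hmult n t, hA, hB,
      ← Real.rpow_natCast ((2:ℝ) ^ ((1:ℝ) - t)) (n / m),
      ← Real.rpow_natCast ((2:ℝ) ^ (-(c * t))) (n - n / m),
      ← Real.rpow_mul (by norm_num), ← Real.rpow_mul (by norm_num),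
      ← Real.rpow_add (by norm_num)]
    congr 1
    rw [Nat.cast_sub (Nat.div_le_self n m)]
    ring
  -- log form
  have hlog : ∀ (n : ℕ) (t : ℝ), (Ψ.Z n t).log * (((n : ℝ)⁻¹ : ℝ) : EReal)
      = ((((1 - t) * ((n / m : ℕ):ℝ) - c * t * ((n:ℝ) - ((n / m : ℕ):ℝ)))
          * Real.log 2 * ((n:ℝ))⁻¹ : ℝ) : EReal) := by
    intro n t
    rw [key2 n t, ENNReal.log_ofReal,
      if_neg (not_le.mpr (Real.rpow_pos_of_pos (by norm_num) _)),
      Real.log_rpow (by norm_num), ← EReal.coe_mul]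
  -- tendsto for each t
  have hTend : ∀ t : ℝ, Tendsto (fun n : ℕ => (Ψ.Z n t).log * (((n : ℝ)⁻¹ : ℝ) : EReal))
      atTop (𝓝 (((1 - t / t₂) / m * Real.log 2 : ℝ) : EReal)) := by
    intro t
    rw [show (fun n : ℕ => (Ψ.Z n t).log * (((n : ℝ)⁻¹ : ℝ) : EReal))
        = fun n : ℕ => ((((1 - t) * ((n / m : ℕ):ℝ) - c * t * ((n:ℝ) - ((n / m : ℕ):ℝ)))
          * Real.log 2 * ((n:ℝ))⁻¹ : ℝ) : EReal) from funext (fun n => hlog n t)]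
    rw [EReal.tendsto_coe]
    have h0 : Tendsto (fun n : ℕ => ((n:ℝ))⁻¹) atTop (𝓝 0) :=
      tendsto_inv_atTop_zero.comp tendsto_natCast_atTop_atTop
    have hr : Tendsto (fun n : ℕ => -((1 - t + c * t) / m) * Real.log 2
        * (((n % m : ℕ):ℝ) * ((n:ℝ))⁻¹)) atTop (𝓝 0) := by
      apply squeeze_zero_norm
        (a := fun n : ℕ => |(1 - t + c * t) / (m:ℝ)| * |Real.log 2| * (m:ℝ) * ((n:ℝ))⁻¹)
      · intro n
        have h1 : ((n % m : ℕ):ℝ) ≤ (m:ℝ) := by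
          exact_mod_cast (Nat.mod_lt n (by omega)).le
        simp only [Real.norm_eq_abs, abs_mul, abs_neg, abs_inv, Nat.abs_cast]
        rw [← mul_assoc]
        gcongr
      · have := h0.const_mul (|(1 - t + c * t) / (m:ℝ)| * |Real.log 2| * (m:ℝ))
        simpa [mul_assoc] using this
    have hconst := (tendsto_const_nhds (x := (1 - t / t₂) / m * Real.log 2)
      (f := atTop (α := ℕ))).add hr
    rw [add_zero] at hconst
    apply hconst.congr'
    filter_upwards [eventually_ge_atTop 1] with n hn
    have hn' : ((n:ℝ)) ≠ 0 := by
      have : (1:ℝ) ≤ (n:ℝ) := by exact_mod_cast hn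
      linarith
    rw [heq t n]
    field_simp
    ring
  refine ⟨?_, ?_, ?_⟩
  · -- bounds
    intro n
    have hD2 : (1 - t₂ + c * t₂) / (m:ℝ) = (1 - t₂) / ((m:ℝ) - 1) := by
      rw [hc]; field_simp; ring
    have he : (1 - t₂) * ((n / m : ℕ):ℝ) - c * t₂ * ((n:ℝ) - ((n / m : ℕ):ℝ))
        = -((1 - t₂) / ((m:ℝ) - 1) * ((n % m : ℕ):ℝ)) := by
      rw [heq t₂ n, div_self ht0, hD2]; ring
    have hrle : ((n % m : ℕ):ℝ) ≤ (m:ℝ) - 1 := by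
      have h1 : n % m < m := Nat.mod_lt n (by omega)
      have h2 : ((n % m : ℕ):ℝ) + 1 ≤ (m:ℝ) := by exact_mod_cast h1
      linarith
    have hd0 : 0 ≤ (1 - t₂) / ((m:ℝ) - 1) := div_nonneg (by linarith) (by linarith)
    have hub : (1 - t₂) * ((n / m : ℕ):ℝ) - c * t₂ * ((n:ℝ) - ((n / m : ℕ):ℝ)) ≤ 0 := by
      rw [he]
      have := mul_nonneg hd0 (by positivity : (0:ℝ) ≤ ((n % m : ℕ):ℝ))
      linarith
    have hlb : -(1 - t₂) ≤ (1 - t₂) * ((n / m : ℕ):ℝ) - c * t₂ * ((n:ℝ) - ((n / m : ℕ):ℝ)) := by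
      rw [he]
      have h3 : (1 - t₂) / ((m:ℝ) - 1) * ((n % m:ℕ):ℝ) ≤ (1 - t₂) / ((m:ℝ) - 1) * ((m:ℝ)-1) :=
        mul_le_mul_of_nonneg_left hrle hd0
      rw [div_mul_cancel₀ _ hm10] at h3
      linarith
    constructor
    · rw [key2 n t₂]
      have hlp : lam ^ (t₂ * ((m:ℝ) - 1)) = (2:ℝ) ^ (-(1 - t₂)) := by
        rw [hB (t₂ * ((m:ℝ)-1))]
        congr 1
        rw [hc]
        field_simp
      rw [hlp]
      exact ENNReal.ofReal_le_ofReal (Real.rpow_le_rpow_of_exponent_le (by norm_num) hlb)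
    · rw [key2 n t₂]
      calc ENNReal.ofReal _ ≤ ENNReal.ofReal 1 := ENNReal.ofReal_le_ofReal
            (Real.rpow_le_one_of_one_le_of_nonpos (by norm_num : (1:ℝ) ≤ 2) hub)
        _ = 1 := ENNReal.ofReal_one
  · -- tendsto to 0
    have := hTend t₂
    rw [div_self ht0] at this
    simpa using this
  · -- Bdim
    have hlowP : ∀ t : ℝ, Ψ.lowP t = (((1 - t / t₂) / m * Real.log 2 : ℝ) : EReal) :=
      fun t => (hTend t).liminf_eq
    have hset : ∀ t : ℝ, (0 < Ψ.lowP t) ↔ t < t₂ := by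
      intro t
      rw [hlowP t, show ((0:EReal)) = ((0:ℝ):EReal) from rfl, EReal.coe_lt_coe_iff]
      have hlog2 : (0:ℝ) < Real.log 2 := Real.log_pos (by norm_num)
      constructor
      · intro h
        by_contra hcon
        push_neg at hcon
        have h1 : 1 - t / t₂ ≤ 0 := by
          have h2 : (1:ℝ) ≤ t / t₂ := (one_le_div ht₂).mpr hcon
          linarith
        have hmpos : (0:ℝ) < m := by linarith
        have h2 : (1 - t / t₂) / (m:ℝ) * Real.log 2 ≤ 0 :=
          mul_nonpos_iff.mpr (Or.inr ⟨div_nonpos_of_nonpos_of_nonneg h1 hmpos.le, hlog2.le⟩)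
        linarith
      · intro h
        have h1 : 0 < 1 - t / t₂ := by
          have : t / t₂ < 1 := (div_lt_one ht₂).mpr h
          linarith
        positivity
    rw [NCIFS.Bdim]
    apply le_antisymm
    · exact iSup_le fun t => ENNReal.ofReal_le_ofReal ((hset t.1).mp t.2.2).le
    · apply le_of_forall_lt
      intro x hx
      have hxt : x ≠ ⊤ := hx.ne_top
      have hx' : x.toReal < t₂ := ENNReal.toReal_lt_of_lt_ofReal hx
      set s : ℝ := (x.toReal + t₂) / 2 with hs
      have hs0 : 0 ≤ s := by
        have := ENNReal.toReal_nonneg (a := x)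
        rw [hs]; linarith
      have hs1 : x.toReal < s := by rw [hs]; linarith
      have hs2 : s < t₂ := by rw [hs]; linarith
      have hmem : 0 ≤ s ∧ (0:EReal) < Ψ.lowP s := ⟨hs0, (hset s).mpr hs2⟩
      calc x = ENNReal.ofReal x.toReal := (ENNReal.ofReal_toReal hxt).symm
        _ < ENNReal.ofReal s := by
            rw [ENNReal.ofReal_lt_ofReal_iff (lt_of_le_of_lt ENNReal.toReal_nonneg hs1)]
            exact hs1
        _ ≤ _ := le_iSup (fun t : {t : ℝ // 0 ≤ t ∧ (0:EReal) < Ψ.lowP t} =>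
            ENNReal.ofReal t.1) ⟨s, hmem⟩
end
end

section
/- Every evenly varying infinite NCIFS belongs to the class 𝓜. That is, if Φ is an infinite NCIFS for which there exist positive reals (γ_i)_{i∈ℕ} and c ≥ 1 with γ_i/c ≤ ‖Dφ_i^(n)‖ ≤ c·γ_i for all i, n, then for every t ∈ (0,d): (a) the sums Z_1^(n)(t) = Σ_i ‖Dφ_i^(n)‖^t are either all finite or all infinite; (b) if finite, then Σ_{i ≤ m} ‖Dφ_i^(n)‖^t / Z_1^(n)(t) → 1 uniformly in n as m → ∞; (c) if infinite, then Σ_{i ≤ m} ‖Dφ_i^(n)‖^t → ∞ uniformly in n as m → ∞. -/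
/-!
Raising `γ_i / c ≤ ‖Dφ_i^(n)‖ ≤ c γ_i` to the power `t` makes every level sequence
`(‖Dφ_i^(n)‖^t)_i` comparable to the single sequence `(γ_i^t)_i` with the constant `K = c^t`,
independent of `n`. All three properties then transfer from `(γ_i^t)_i`: summability of each
level is that of `γ^t`; the relative tail of level `n` is at most `K²` times the relative tail
of `γ^t`; and the partial sums of level `n` are at least `1/K` times those of `γ^t`.
-/

open Filter Finset Topology

theorem Real.rpow_le_mul_rpow_of_le_mul {x y c : ℝ} (hx : 0 ≤ x) (hy : 0 ≤ y) (hc : 0 ≤ c)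
    (h : x ≤ c * y) {t : ℝ} (ht : 0 ≤ t) : x ^ t ≤ c ^ t * y ^ t := by
  rw [← Real.mul_rpow hc hy]
  exact Real.rpow_le_rpow hx h ht

theorem summable_iff_of_le_mul_of_le_mul {ι : Type*} {f g : ι → ℝ} {K : ℝ}
    (hf : ∀ i, 0 ≤ f i) (hg : ∀ i, 0 ≤ g i)
    (hfg : ∀ i, f i ≤ K * g i) (hgf : ∀ i, g i ≤ K * f i) : Summable f ↔ Summable g :=
  ⟨fun hsf => .of_nonneg_of_le hg hgf (hsf.mul_left K),
    fun hsg => .of_nonneg_of_le hf hfg (hsg.mul_left K)⟩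

theorem tsum_le_mul_tsum {ι : Type*} {f g : ι → ℝ} {K : ℝ} (hf : Summable f) (hg : Summable g)
    (hfg : ∀ i, f i ≤ K * g i) : ∑' i, f i ≤ K * ∑' i, g i := by
  rw [← tsum_mul_left]
  exact hf.tsum_le_tsum hfg (hg.mul_left K)

theorem tsum_sub_sum_range_le_mul {f g : ℕ → ℝ} {K : ℝ} (hf : Summable f) (hg : Summable g)
    (hfg : ∀ i, f i ≤ K * g i) (m : ℕ) :
    ∑' i, f i - ∑ i ∈ range m, f i ≤ K * (∑' i, g i - ∑ i ∈ range m, g i) := by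
  rw [← hf.sum_add_tsum_nat_add m, ← hg.sum_add_tsum_nat_add m]
  simp only [add_sub_cancel_left]
  exact tsum_le_mul_tsum ((summable_nat_add_iff m).mpr hf) ((summable_nat_add_iff m).mpr hg)
    fun i => hfg (i + m)

theorem abs_div_sub_one_le_of_sub_le {P T S r K : ℝ} (hK : 0 < K) (hS : 0 < S)
    (hPT : P ≤ T) (hTP : T - P ≤ K * r) (hST : S ≤ K * T) :
    |P / T - 1| ≤ K * K * r / S := by
  have hT : 0 < T := pos_of_mul_pos_right (hS.trans_le hST) hK.le
  rw [div_sub_one hT.ne', abs_div, abs_of_nonpos (by linarith), abs_of_pos hT, neg_sub,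
    div_le_div_iff₀ hT hS]
  calc (T - P) * S ≤ K * r * (K * T) :=
        mul_le_mul hTP hST hS.le (hTP.trans' (sub_nonneg.mpr hPT))
    _ = K * K * r * T := by ring

section UniformlyComparable

variable {f : ℕ → ℕ → ℝ} {g : ℕ → ℝ} {K : ℝ}

theorem eventually_forall_le_sum_range_of_not_summable (hg : ¬Summable g) (hg0 : ∀ i, 0 ≤ g i)
    (hK : 0 < K) (hgf : ∀ n i, g i ≤ K * f n i) (C : ℝ) :
    ∀ᶠ m in atTop, ∀ n, C ≤ ∑ i ∈ range m, f n i := by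
  have hg_top := (not_summable_iff_tendsto_nat_atTop_of_nonneg hg0).mp hg
  filter_upwards [hg_top.eventually_ge_atTop (K * C)] with m hm n
  have hgf_sum : ∑ i ∈ range m, g i ≤ K * ∑ i ∈ range m, f n i := by
    rw [mul_sum]
    exact sum_le_sum fun i _ => hgf n i
  exact le_of_mul_le_mul_left (hm.trans hgf_sum) hK

theorem tendstoUniformly_sum_range_div_tsum (hg : Summable g) (hS : 0 < ∑' i, g i) (hK : 0 < K)
    (hf0 : ∀ n i, 0 ≤ f n i)
    (hfg : ∀ n i, f n i ≤ K * g i) (hgf : ∀ n i, g i ≤ K * f n i) :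
    TendstoUniformly (fun m n => (∑ i ∈ range m, f n i) / ∑' i, f n i) (fun _ => 1) atTop := by
  have hf n : Summable (f n) := .of_nonneg_of_le (hf0 n) (hfg n) (hg.mul_left K)
  have hg_tail : Tendsto (fun m => K * K * (∑' i, g i - ∑ i ∈ range m, g i) / ∑' i, g i)
      atTop (𝓝 0) := by
    have h := (tendsto_const_nhds (x := ∑' i, g i)).sub hg.hasSum.tendsto_sum_nat
    simpa using (h.const_mul (K * K)).div_const (∑' i, g i)
  rw [Metric.tendstoUniformly_iff]
  intro ε hε
  filter_upwards [hg_tail.eventually (gt_mem_nhds hε)] with m hm n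
  rw [Real.dist_eq, abs_sub_comm]
  exact (abs_div_sub_one_le_of_sub_le hK hS
    ((hf n).sum_le_tsum _ fun i _ => hf0 n i) (tsum_sub_sum_range_le_mul (hf n) hg (hfg n) m)
    (tsum_le_mul_tsum hg (hf n) (hgf n))).trans_lt hm

end UniformlyComparable

theorem evenly_varying_mem_class_M_general (D : ℕ → ℕ → ℝ)
    (γ : ℕ → ℝ) (hγ : ∀ i, 0 < γ i) (c : ℝ) (hc : 1 ≤ c)
    (hlow : ∀ n i, γ i / c ≤ D n i) (hup : ∀ n i, D n i ≤ c * γ i)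
    (t : ℝ) (ht : 0 < t) :
    ((∀ n, Summable (fun i => D n i ^ t)) ∨ (∀ n, ¬ Summable (fun i => D n i ^ t))) ∧
    ((∀ n, Summable (fun i => D n i ^ t)) →
      ∀ ε : ℝ, 0 < ε → ∃ M : ℕ, ∀ m ≥ M, ∀ n,
        |(∑ i ∈ Finset.range m, D n i ^ t) / (∑' i, D n i ^ t) - 1| < ε) ∧
    ((∀ n, ¬ Summable (fun i => D n i ^ t)) →
      ∀ C : ℝ, ∃ M : ℕ, ∀ m ≥ M, ∀ n, C ≤ ∑ i ∈ Finset.range m, D n i ^ t) := by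
  have hc0 : 0 < c := one_pos.trans_le hc
  have hD0 n i : 0 ≤ D n i := (div_pos (hγ i) hc0).le.trans (hlow n i)
  have hDγ n i : D n i ^ t ≤ c ^ t * γ i ^ t :=
    Real.rpow_le_mul_rpow_of_le_mul (hD0 n i) (hγ i).le hc0.le (hup n i) ht.le
  have hγD n i : γ i ^ t ≤ c ^ t * D n i ^ t :=
    Real.rpow_le_mul_rpow_of_le_mul (hγ i).le (hD0 n i) hc0.le
      ((div_le_iff₀' hc0).mp (hlow n i)) ht.le
  have hγ0 i : 0 < γ i ^ t := Real.rpow_pos_of_pos (hγ i) t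
  have hD0t n i : 0 ≤ D n i ^ t := Real.rpow_nonneg (hD0 n i) t
  have hct : 0 < c ^ t := Real.rpow_pos_of_pos hc0 t
  have hsummable n : Summable (fun i => D n i ^ t) ↔ Summable (fun i => γ i ^ t) :=
    summable_iff_of_le_mul_of_le_mul (hD0t n) (fun i => (hγ0 i).le) (hDγ n) (hγD n)
  by_cases hγt : Summable (fun i => γ i ^ t)
  · have hall n := (hsummable n).mpr hγt
    refine ⟨.inl hall, fun _ ε hε => ?_, fun hnone => absurd (hall 0) (hnone 0)⟩
    have hunif := tendstoUniformly_sum_range_div_tsum hγt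
      (hγt.tsum_pos (fun i => (hγ0 i).le) 0 (hγ0 0)) hct hD0t hDγ hγD
    obtain ⟨M, hM⟩ := (Metric.tendstoUniformly_iff.mp hunif ε hε).exists_forall_of_atTop
    exact ⟨M, fun m hm n => by simpa [Real.dist_eq, abs_sub_comm] using hM m hm n⟩
  · have hnone n := mt (hsummable n).mp hγt
    refine ⟨.inr hnone, fun hall => absurd (hall 0) (hnone 0), fun _ C => ?_⟩
    exact (eventually_forall_le_sum_range_of_not_summable hγt (fun i => (hγ0 i).le) hct hγD
      C).exists_forall_of_atTop

/-- Every evenly varying infinite NCIFS belongs to the class `𝓜`. Here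
`D n i = ‖Dφ_i^{(n)}‖` are the derivative norms of an infinite system (alphabet `ℕ` at every
level), and even variation means `γ_i/c ≤ D n i ≤ c·γ_i` for some positive reals `(γ_i)` and
some `c ≥ 1`. Then for every `t ∈ (0,d)`: (a) the level sums `Σ_i (D n i)^t` are all finite or
all infinite; (b) if finite, the partial sums over `i < m`, divided by the full sum, tend to `1`
uniformly in `n` as `m → ∞`; (c) if infinite, the partial sums tend to `∞` uniformly in `n`. -/
theorem evenly_varying_mem_class_M (d : ℕ) (D : ℕ → ℕ → ℝ) (hDpos : ∀ n i, 0 < D n i)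
    (γ : ℕ → ℝ) (hγ : ∀ i, 0 < γ i) (c : ℝ) (hc : 1 ≤ c)
    (hlow : ∀ n i, γ i / c ≤ D n i) (hup : ∀ n i, D n i ≤ c * γ i)
    (t : ℝ) (ht : 0 < t) (htd : t < d) :
    ((∀ n, Summable (fun i => D n i ^ t)) ∨ (∀ n, ¬ Summable (fun i => D n i ^ t))) ∧
    ((∀ n, Summable (fun i => D n i ^ t)) →
      ∀ ε : ℝ, 0 < ε → ∃ M : ℕ, ∀ m ≥ M, ∀ n,
        |(∑ i ∈ Finset.range m, D n i ^ t) / (∑' i, D n i ^ t) - 1| < ε) ∧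
    ((∀ n, ¬ Summable (fun i => D n i ^ t)) →
      ∀ C : ℝ, ∃ M : ℕ, ∀ m ≥ M, ∀ n, C ≤ ∑ i ∈ Finset.range m, D n i ^ t) :=
  evenly_varying_mem_class_M_general D γ hγ c hc hlow hup t ht
end
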